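/- arXiv:2401.00484 — 5 statements merged into one kernel-verified Lean document; each statement's English description precedes it below -/
import Mathlib

section
/- Let a finite oriented metric graph be given in which every vertex is boundary-reachable. Let R_e : [0, ℓ e] → ℝ be measurable with 0 < R_min ≤ R_e(s) ≤ R_max for all e and s, let g_e, f_e ∈ L²(0, ℓ e) for every edge e, and let f_V : V → ℝ. Then there exists a primal solution (q, p) of the hydraulic network problem, and it is unique in the sense that if (q, p) and (q̂, p̂) are two primal solutions then q_e = q̂_e almost everywhere on (0, ℓ e) and p_e = p̂_e everywhere on [0, ℓ e] for every edge e. -/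
open MeasureTheory intervalIntegral
open scoped BigOperators

/-- The degree of a vertex `v`: `#{e | src e = v} + #{e | dst e = v}`. -/
def degree {E V : Type*} [Fintype E] [DecidableEq V] (src dst : E → V) (v : V) : ℕ :=
  (Finset.univ.filter fun e => src e = v).card +
    (Finset.univ.filter fun e => dst e = v).card

/-- A vertex `v` is boundary-reachable if there is a finite walk along edges
(traversed in either direction) from `v` to some vertex of degree one. -/
def BoundaryReachable {E V : Type*} [Fintype E] [DecidableEq V]
    (src dst : E → V) (v : V) : Prop :=
  ∃ b : V, Relation.ReflTransGen
      (fun x y => ∃ e, (src e = x ∧ dst e = y) ∨ (src e = y ∧ dst e = x)) v b ∧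
    degree src dst b = 1

/-- A primal solution of the hydraulic network problem on a finite oriented metric graph,
with resistances `R`, edge data `g`, `f`, and vertex data `fV`.  It consists of edgewise
`L²` fluxes `q`, edgewise absolutely continuous pressures `p` with derivatives
`p' ∈ L²`, continuous across vertices with vertex values `P` vanishing at boundary
vertices, satisfying the two variational identities. -/
def IsPrimalSolution {E V : Type*} [Fintype E] [Fintype V] [DecidableEq V]
    (src dst : E → V) (ℓ : E → ℝ)
    (R g f : E → ℝ → ℝ) (fV : V → ℝ)
    (q p p' : E → ℝ → ℝ) (P : V → ℝ) : Prop :=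
  (∀ e, MemLp (q e) 2 (volume.restrict (Set.Ioo (0:ℝ) (ℓ e)))) ∧
  (∀ e, ∀ x ∈ Set.Icc (0:ℝ) (ℓ e), ∀ y ∈ Set.Icc (0:ℝ) (ℓ e),
    p e y - p e x = ∫ s in x..y, p' e s) ∧
  (∀ e, MemLp (p' e) 2 (volume.restrict (Set.Ioo (0:ℝ) (ℓ e)))) ∧
  (∀ e, p e 0 = P (src e)) ∧
  (∀ e, p e (ℓ e) = P (dst e)) ∧
  (∀ v, degree src dst v = 1 → P v = 0) ∧
  -- (i) the momentum equation against edgewise L² test functions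
  (∀ ψ : E → ℝ → ℝ, (∀ e, MemLp (ψ e) 2 (volume.restrict (Set.Ioo (0:ℝ) (ℓ e)))) →
    (∑ e, ∫ s in Set.Ioo (0:ℝ) (ℓ e), R e s * q e s * ψ e s)
      + (∑ e, ∫ s in Set.Ioo (0:ℝ) (ℓ e), p' e s * ψ e s)
      = ∑ e, ∫ s in Set.Ioo (0:ℝ) (ℓ e), g e s * ψ e s) ∧
  -- (ii) the mass equation against continuous, edgewise H¹ test functions vanishing
  -- at boundary vertices
  (∀ (φ φ' : E → ℝ → ℝ) (Φ : V → ℝ),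
    (∀ e, ∀ x ∈ Set.Icc (0:ℝ) (ℓ e), ∀ y ∈ Set.Icc (0:ℝ) (ℓ e),
      φ e y - φ e x = ∫ s in x..y, φ' e s) →
    (∀ e, MemLp (φ' e) 2 (volume.restrict (Set.Ioo (0:ℝ) (ℓ e)))) →
    (∀ e, φ e 0 = Φ (src e)) →
    (∀ e, φ e (ℓ e) = Φ (dst e)) →
    (∀ v, degree src dst v = 1 → Φ v = 0) →
    (∑ e, ∫ s in Set.Ioo (0:ℝ) (ℓ e), q e s * φ' e s)
      = -(∑ e, ∫ s in Set.Ioo (0:ℝ) (ℓ e), f e s * φ e s) - ∑ v, fV v * Φ v)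

/-!
On each edge the mass equation forces `q = α_e + ∫₀ˢ f_e` and the momentum equation
`p' = g_e - R_e q`, so a solution is determined by the inflows `α_e` and the vertex pressures
`P`. The pressure drop along `e` is affine in `α_e` with slope `-∫ R_e < 0`, and integrating the
mass equation by parts turns it into Kirchhoff's law at the internal vertices. Eliminating `α`
leaves a linear system for `P` whose matrix is the Laplacian of the graph with conductances
`1 / ∫ R_e`, grounded at the boundary vertices; its energy `∑ (P (dst e) - P (src e))² / ∫ R_e`
vanishes only if `P` is constant along edges, hence zero by boundary-reachability, so the system
is invertible.

For uniqueness, testing the difference of the momentum equations with `Δq` and the difference of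
the mass equations with `Δp` gives `∑ ∫ R Δq² = 0`; hence `Δq = 0`, then `Δp' = 0`, and `Δp` is
constant along edges and vanishes at the boundary, hence everywhere.
-/

open Set
open scoped ENNReal Topology

section Graph

variable {E V : Type*} [Fintype E] [DecidableEq V] (src dst : E → V)

theorem BoundaryReachable.apply_eq {α : Type*} {P : V → α} {c : α}
    (hedge : ∀ e, P (src e) = P (dst e)) (hbd : ∀ v, degree src dst v = 1 → P v = c)
    {v : V} (hv : BoundaryReachable src dst v) : P v = c := by
  obtain ⟨b, hvb, hb⟩ := hv
  suffices P v = P b from this.trans (hbd b hb)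
  clear hb
  induction hvb with
  | refl => rfl
  | tail _ hxy ih =>
    obtain ⟨e, ⟨rfl, rfl⟩ | ⟨rfl, rfl⟩⟩ := hxy
    · exact ih.trans (hedge e)
    · exact ih.trans (hedge e).symm

/-- `qIn e` is the flux of `e` where it enters `dst e`, `qOut e` the flux where it leaves
`src e`. -/
def netInflow (qIn qOut : E → ℝ) (v : V) : ℝ :=
  ∑ e ∈ Finset.univ.filter (dst · = v), qIn e - ∑ e ∈ Finset.univ.filter (src · = v), qOut e

theorem netInflow_sub (a a' b b' : E → ℝ) (v : V) :
    netInflow src dst (fun e => a e - b e) (fun e => a' e - b' e) v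
      = netInflow src dst a a' v - netInflow src dst b b' v := by
  simp only [netInflow, Finset.sum_sub_distrib]
  ring

theorem sum_mul_dst_sub_mul_src [Fintype V] (qIn qOut : E → ℝ) (Φ : V → ℝ) :
    ∑ e, (qIn e * Φ (dst e) - qOut e * Φ (src e)) = ∑ v, Φ v * netInflow src dst qIn qOut v := by
  simp only [netInflow, mul_sub, Finset.mul_sum, Finset.sum_sub_distrib]
  congr 1
  · rw [← Finset.sum_fiberwise Finset.univ dst]
    refine Finset.sum_congr rfl fun v _ => Finset.sum_congr rfl fun e he => ?_
    rw [(Finset.mem_filter.1 he).2, mul_comm]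
  · rw [← Finset.sum_fiberwise Finset.univ src]
    refine Finset.sum_congr rfl fun v _ => Finset.sum_congr rfl fun e he => ?_
    rw [(Finset.mem_filter.1 he).2, mul_comm]

def weightedGradient (w : E → ℝ) (P : V → ℝ) (e : E) : ℝ := w e * (P (dst e) - P (src e))

/-- The rows of boundary vertices are those of the identity: they impose `P v = 0` there. -/
def groundedLaplacian (w : E → ℝ) : (V → ℝ) →ₗ[ℝ] V → ℝ where
  toFun P v := if degree src dst v = 1 then P v else
    netInflow src dst (weightedGradient src dst w P) (weightedGradient src dst w P) v
  map_add' P Q := by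
    ext v
    simp only [Pi.add_apply]
    split_ifs
    · rfl
    · rw [netInflow, netInflow, netInflow, sub_add_sub_comm, ← Finset.sum_add_distrib,
        ← Finset.sum_add_distrib]
      congr 1 <;> exact Finset.sum_congr rfl fun _ _ => by
        simp only [weightedGradient, Pi.add_apply]; ring
  map_smul' c P := by
    ext v
    simp only [Pi.smul_apply, smul_eq_mul, RingHom.id_apply]
    split_ifs
    · rfl
    · rw [netInflow, netInflow, mul_sub, Finset.mul_sum, Finset.mul_sum]
      congr 1 <;> exact Finset.sum_congr rfl fun _ _ => by
        simp only [weightedGradient, Pi.smul_apply, smul_eq_mul]; ring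

theorem groundedLaplacian_injective [Fintype V] {w : E → ℝ} (hw : ∀ e, 0 < w e)
    (hreach : ∀ v, BoundaryReachable src dst v) :
    Function.Injective (groundedLaplacian src dst w) := by
  rw [← LinearMap.ker_eq_bot, LinearMap.ker_eq_bot']
  intro P hP
  have hbd : ∀ v, degree src dst v = 1 → P v = 0 := fun v hv => by
    simpa [groundedLaplacian, hv] using congrFun hP v
  have hint : ∀ v, degree src dst v ≠ 1 → netInflow src dst (weightedGradient src dst w P)
      (weightedGradient src dst w P) v = 0 := fun v hv => by
    simpa [groundedLaplacian, hv] using congrFun hP v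
  have henergy : ∑ e, w e * (P (dst e) - P (src e)) ^ 2 = 0 := by
    calc ∑ e, w e * (P (dst e) - P (src e)) ^ 2
        = ∑ e, (weightedGradient src dst w P e * P (dst e)
            - weightedGradient src dst w P e * P (src e)) :=
          Finset.sum_congr rfl fun e _ => by rw [weightedGradient]; ring
      _ = 0 := by
        rw [sum_mul_dst_sub_mul_src]
        refine Finset.sum_eq_zero fun v _ => ?_
        by_cases hv : degree src dst v = 1
        · rw [hbd v hv, zero_mul]
        · rw [hint v hv, mul_zero]
  have hedge : ∀ e, P (src e) = P (dst e) := fun e => by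
    have h := (Finset.sum_eq_zero_iff_of_nonneg fun e _ => mul_nonneg (hw e).le (sq_nonneg _)).1
      henergy e (Finset.mem_univ e)
    rw [mul_eq_zero, or_iff_right (hw e).ne', sq_eq_zero_iff, sub_eq_zero] at h
    exact h.symm
  funext v
  exact BoundaryReachable.apply_eq src dst hedge hbd (hreach v)

theorem exists_netInflow_weightedGradient_eq [Fintype V] {w : E → ℝ} (hw : ∀ e, 0 < w e)
    (hreach : ∀ v, BoundaryReachable src dst v) (b : V → ℝ) :
    ∃ P : V → ℝ, (∀ v, degree src dst v = 1 → P v = 0) ∧ ∀ v, degree src dst v ≠ 1 →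
      netInflow src dst (weightedGradient src dst w P) (weightedGradient src dst w P) v = b v := by
  obtain ⟨P, hP⟩ := LinearMap.injective_iff_surjective.1
    (groundedLaplacian_injective src dst hw hreach) fun v => if degree src dst v = 1 then 0 else b v
  exact ⟨P, fun v hv => by simpa [groundedLaplacian, hv] using congrFun hP v,
    fun v hv => by simpa [groundedLaplacian, hv] using congrFun hP v⟩

/-- `α e` and `α e + F e` are the fluxes of `e` at its source and target, `A e` is its total
resistance and `D e` its pressure drop when `α e = 0`. -/
theorem exists_kirchhoff_solution [Fintype V] (hreach : ∀ v, BoundaryReachable src dst v)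
    {A : E → ℝ} (hA : ∀ e, 0 < A e) (D F : E → ℝ) (fV : V → ℝ) :
    ∃ (α : E → ℝ) (P : V → ℝ), (∀ v, degree src dst v = 1 → P v = 0) ∧
      (∀ e, D e - α e * A e = P (dst e) - P (src e)) ∧
      ∀ v, degree src dst v ≠ 1 → netInflow src dst (fun e => α e + F e) α v = -fV v := by
  obtain ⟨P, hbd, hP⟩ := exists_netInflow_weightedGradient_eq src dst
    (fun e => inv_pos.2 (hA e)) hreach
    fun v => fV v + netInflow src dst (fun e => (A e)⁻¹ * D e + F e) (fun e => (A e)⁻¹ * D e) v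
  refine ⟨fun e => (A e)⁻¹ * (D e - (P (dst e) - P (src e))), P, hbd,
    fun e => by field_simp [(hA e).ne']; ring, fun v hv => ?_⟩
  have h := netInflow_sub src dst (fun e => (A e)⁻¹ * D e + F e) (fun e => (A e)⁻¹ * D e)
    (weightedGradient src dst (fun e => (A e)⁻¹) P)
    (weightedGradient src dst (fun e => (A e)⁻¹) P) v
  rw [hP v hv] at h
  convert h using 2
  · funext e; rw [weightedGradient]; ring
  · funext e; rw [weightedGradient]; ring
  · ring

end Graph

theorem AbsolutelyContinuousOnInterval.congr {X : Type*} [PseudoMetricSpace X] {f g : ℝ → X}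
    {a b : ℝ} (hf : AbsolutelyContinuousOnInterval f a b) (h : EqOn f g (uIcc a b)) :
    AbsolutelyContinuousOnInterval g a b := by
  refine Filter.Tendsto.congr' ?_ hf
  filter_upwards [Filter.mem_inf_of_right (Filter.mem_principal_self _)] with E hE
  exact Finset.sum_congr rfl fun i hi => by rw [h (hE.1 i hi).1, h (hE.1 i hi).2]

theorem ContinuousOn.memLp_top_restrict {μ : Measure ℝ} {u : ℝ → ℝ} {K s : Set ℝ}
    (hK : IsCompact K) (hu : ContinuousOn u K) (hsK : s ⊆ K) : MemLp u ⊤ (μ.restrict s) := by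
  obtain ⟨C, hC⟩ := hK.exists_bound_of_continuousOn hu
  refine MemLp.mono_measure (Measure.restrict_mono hsK le_rfl) <|
    memLp_top_of_bound (hu.aestronglyMeasurable hK.measurableSet) C ?_
  filter_upwards [ae_restrict_mem hK.measurableSet] with x hx using hC x hx

theorem integral_pos_of_ae_pos {α : Type*} [MeasurableSpace α] {μ : Measure α} [NeZero μ]
    {f : α → ℝ} (hf : Integrable f μ) (hpos : ∀ᵐ x ∂μ, 0 < f x) : 0 < ∫ x, f x ∂μ := by
  have hnonneg : 0 ≤ᵐ[μ] f := hpos.mono fun x hx => hx.le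
  refine (integral_nonneg_of_ae hnonneg).lt_of_ne fun h => ?_
  have hzero := (integral_eq_zero_iff_of_nonneg_ae hnonneg hf).1 h.symm
  have : ∀ᵐ x ∂μ, False := (hpos.and hzero).mono fun x hx => hx.1.ne' hx.2
  exact NeZero.ne μ (ae_eq_bot.1 (Filter.eventually_false_iff_eq_bot.1 this))

section Primitive

def IsPrimitiveOn (u u' : ℝ → ℝ) (a b : ℝ) : Prop :=
  ∀ x ∈ Icc a b, ∀ y ∈ Icc a b, u y - u x = ∫ t in x..y, u' t

variable {u u' v v' : ℝ → ℝ} {a b : ℝ}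

theorem isPrimitiveOn_integral (h : IntervalIntegrable u' volume a b) :
    IsPrimitiveOn (fun x => ∫ t in a..x, u' t) u' a b := fun _ hx _ hy =>
  intervalIntegral.integral_interval_sub_left
    (h.mono_set (uIcc_subset_uIcc left_mem_uIcc (Icc_subset_uIcc hy)))
    (h.mono_set (uIcc_subset_uIcc left_mem_uIcc (Icc_subset_uIcc hx)))

theorem IsPrimitiveOn.const_add (h : IsPrimitiveOn u u' a b) (c : ℝ) :
    IsPrimitiveOn (fun x => c + u x) u' a b := fun x hx y hy => by
  rw [add_sub_add_left_eq_sub, h x hx y hy]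

theorem IsPrimitiveOn.sub (hu : IsPrimitiveOn u u' a b) (hv : IsPrimitiveOn v v' a b)
    (hu' : IntervalIntegrable u' volume a b) (hv' : IntervalIntegrable v' volume a b) :
    IsPrimitiveOn (fun x => u x - v x) (fun x => u' x - v' x) a b := fun x hx y hy => by
  have hxy : uIcc x y ⊆ uIcc a b := uIcc_subset_uIcc (Icc_subset_uIcc hx) (Icc_subset_uIcc hy)
  rw [intervalIntegral.integral_sub (hu'.mono_set hxy) (hv'.mono_set hxy), ← hu x hx y hy,
    ← hv x hx y hy]
  ring

theorem IsPrimitiveOn.eq_add_integral (h : IsPrimitiveOn u u' a b) {x : ℝ} (hx : x ∈ Icc a b) :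
    u x = u a + ∫ t in a..x, u' t := by
  linarith [h a (left_mem_Icc.2 (hx.1.trans hx.2)) x hx]

theorem IsPrimitiveOn.absolutelyContinuousOnInterval (h : IsPrimitiveOn u u' a b)
    (hab : a ≤ b) (hu' : IntervalIntegrable u' volume a b) :
    AbsolutelyContinuousOnInterval u a b :=
  ((LipschitzWith.const (u a)).lipschitzOnWith.absolutelyContinuousOnInterval.add
    (hu'.absolutelyContinuousOnInterval_intervalIntegral left_mem_uIcc)).congr
    fun _ hx => (h.eq_add_integral (uIcc_of_le hab ▸ hx)).symm

theorem IsPrimitiveOn.ae_deriv_eq (h : IsPrimitiveOn u u' a b)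
    (hu' : IntervalIntegrable u' volume a b) : ∀ᵐ x, x ∈ Ioo a b → deriv u x = u' x := by
  filter_upwards [hu'.ae_hasDerivAt_integral] with x hx hxab
  have hU : (fun y => u a + ∫ t in a..y, u' t) =ᶠ[𝓝 x] u := by
    filter_upwards [Ioo_mem_nhds hxab.1 hxab.2] with y hy
    exact (h.eq_add_integral (Ioo_subset_Icc_self hy)).symm
  rw [← hU.deriv_eq]
  exact ((hx (Icc_subset_uIcc (Ioo_subset_Icc_self hxab)) a left_mem_uIcc).const_add _).deriv

theorem IsPrimitiveOn.setIntegral_mul_eq (hab : a ≤ b) (hu : IsPrimitiveOn u u' a b)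
    (hv : IsPrimitiveOn v v' a b) (hu' : IntervalIntegrable u' volume a b)
    (hv' : IntervalIntegrable v' volume a b) :
    ∫ x in Ioo a b, u x * v' x = u b * v b - u a * v a - ∫ x in Ioo a b, u' x * v x := by
  have hibp := (hu.absolutelyContinuousOnInterval hab hu').integral_mul_deriv_eq_deriv_mul
    (hv.absolutelyContinuousOnInterval hab hv')
  simp only [intervalIntegral.integral_of_le hab, integral_Ioc_eq_integral_Ioo] at hibp
  rw [setIntegral_congr_ae measurableSet_Ioo, hibp, setIntegral_congr_ae measurableSet_Ioo]
  · filter_upwards [hu.ae_deriv_eq hu'] with _ hx hxab using by rw [hx hxab]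
  · filter_upwards [hv.ae_deriv_eq hv'] with _ hx hxab using by rw [hx hxab]

theorem IsPrimitiveOn.eq_left_of_ae_eq_zero (h : IsPrimitiveOn u u' a b)
    (hu' : u' =ᵐ[volume.restrict (Ioo a b)] 0) {x : ℝ} (hx : x ∈ Icc a b) : u x = u a := by
  rw [h.eq_add_integral hx, add_eq_left]
  rw [Measure.restrict_congr_set Ioo_ae_eq_Ioc, Filter.EventuallyEq,
    ae_restrict_iff' measurableSet_Ioc] at hu'
  refine intervalIntegral.integral_zero_ae ?_
  filter_upwards [hu'] with t ht htx
  rw [uIoc_of_le hx.1] at htx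
  exact ht ⟨htx.1, htx.2.trans hx.2⟩

end Primitive

section Network

variable {E : Type*} (ℓ : E → ℝ)

def EdgewiseMemLp (p : ℝ≥0∞) (u : E → ℝ → ℝ) : Prop :=
  ∀ e, MemLp (u e) p (volume.restrict (Ioo 0 (ℓ e)))

noncomputable def graphInner [Fintype E] (u v : E → ℝ → ℝ) : ℝ :=
  ∑ e, ∫ s in Ioo 0 (ℓ e), u e s * v e s

variable {ℓ} {u v w : E → ℝ → ℝ}

theorem EdgewiseMemLp.sub {p : ℝ≥0∞} (hu : EdgewiseMemLp ℓ p u) (hv : EdgewiseMemLp ℓ p v) :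
    EdgewiseMemLp ℓ p (u - v) := fun e => (hu e).sub (hv e)

theorem EdgewiseMemLp.mul {p : ℝ≥0∞} (hw : EdgewiseMemLp ℓ ⊤ w) (hu : EdgewiseMemLp ℓ p u) :
    EdgewiseMemLp ℓ p (w * u) := fun e => (hu e).mul (hw e)

theorem EdgewiseMemLp.intervalIntegrable {p : ℝ≥0∞} (hu : EdgewiseMemLp ℓ p u) (hp : 1 ≤ p)
    {e : E} (he : 0 ≤ ℓ e) : IntervalIntegrable (u e) volume 0 (ℓ e) :=
  (intervalIntegrable_iff_integrableOn_Ioo_of_le he).2 ((hu e).integrable hp)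

theorem IsPrimitiveOn.edgewiseMemLp {u' : E → ℝ → ℝ} {p : ℝ≥0∞} (hℓ : ∀ e, 0 ≤ ℓ e)
    (hu : ∀ e, IsPrimitiveOn (u e) (u' e) 0 (ℓ e))
    (hu' : ∀ e, IntervalIntegrable (u' e) volume 0 (ℓ e)) : EdgewiseMemLp ℓ p u := fun e =>
  (((hu e).absolutelyContinuousOnInterval (hℓ e) (hu' e)).continuousOn.memLp_top_restrict
    isCompact_uIcc (Ioo_subset_Icc_self.trans Icc_subset_uIcc)).mono_exponent le_top

variable [Fintype E]

theorem graphInner_comm (u v : E → ℝ → ℝ) : graphInner ℓ u v = graphInner ℓ v u := by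
  simp only [graphInner, mul_comm]

theorem graphInner_sub_left {u₁ u₂ : E → ℝ → ℝ} (hu₁ : EdgewiseMemLp ℓ 2 u₁)
    (hu₂ : EdgewiseMemLp ℓ 2 u₂) (hv : EdgewiseMemLp ℓ 2 v) :
    graphInner ℓ (u₁ - u₂) v = graphInner ℓ u₁ v - graphInner ℓ u₂ v := by
  simp only [graphInner, ← Finset.sum_sub_distrib, Pi.sub_apply, sub_mul]
  exact Finset.sum_congr rfl fun e _ =>
    integral_sub ((hu₁ e).integrable_mul (hv e)) ((hu₂ e).integrable_mul (hv e))

theorem graphInner_eq_zero_of_ae_eq_zero (hu : ∀ e, u e =ᵐ[volume.restrict (Ioo 0 (ℓ e))] 0) :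
    graphInner ℓ u v = 0 :=
  Finset.sum_eq_zero fun e _ => integral_eq_zero_of_ae <| by
    filter_upwards [hu e] with s hs
    simp only [hs, Pi.zero_apply, zero_mul]

theorem ae_eq_zero_of_graphInner_mul_self_eq_zero
    (hw : ∀ e, ∀ᵐ s ∂volume.restrict (Ioo 0 (ℓ e)), 0 < w e s) (hw' : EdgewiseMemLp ℓ ⊤ w)
    (hu : EdgewiseMemLp ℓ 2 u) (h : graphInner ℓ (w * u) u = 0) (e : E) :
    u e =ᵐ[volume.restrict (Ioo 0 (ℓ e))] 0 := by
  have hnonneg : ∀ e, 0 ≤ᵐ[volume.restrict (Ioo 0 (ℓ e))] fun s => w e s * u e s * u e s :=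
    fun e => (hw e).mono fun s hs => by
      simpa only [Pi.zero_apply, mul_assoc] using mul_nonneg hs.le (mul_self_nonneg (u e s))
  have hzero := (Finset.sum_eq_zero_iff_of_nonneg fun e _ => integral_nonneg_of_ae (hnonneg e)).1
    h e (Finset.mem_univ e)
  filter_upwards [(integral_eq_zero_iff_of_nonneg_ae (hnonneg e)
    (((hw'.mul hu) e).integrable_mul (hu e))).1 hzero, hw e] with s hs hws
  simpa [mul_assoc, hws.ne'] using hs

end Network

section PrimalProblem

variable {E V : Type*} [Fintype E] [DecidableEq V] {src dst : E → V} {ℓ : E → ℝ}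

theorem eq_zero_of_isPrimitiveOn_of_ae_eq_zero (hℓ : ∀ e, 0 ≤ ℓ e)
    (hreach : ∀ v, BoundaryReachable src dst v) {u u' : E → ℝ → ℝ} {U : V → ℝ}
    (hu : ∀ e, IsPrimitiveOn (u e) (u' e) 0 (ℓ e))
    (hu' : ∀ e, u' e =ᵐ[volume.restrict (Ioo 0 (ℓ e))] 0) (hsrc : ∀ e, u e 0 = U (src e))
    (hdst : ∀ e, u e (ℓ e) = U (dst e)) (hbd : ∀ v, degree src dst v = 1 → U v = 0)
    (e : E) {x : ℝ} (hx : x ∈ Icc 0 (ℓ e)) : u e x = 0 := by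
  have hconst : ∀ e, ∀ x ∈ Icc 0 (ℓ e), u e x = U (src e) := fun e x hx =>
    ((hu e).eq_left_of_ae_eq_zero (hu' e) hx).trans (hsrc e)
  have hU : ∀ v, U v = 0 := fun v => BoundaryReachable.apply_eq src dst
    (fun e => ((hdst e).symm.trans (hconst e (ℓ e) (right_mem_Icc.2 (hℓ e)))).symm)
    hbd (hreach v)
  rw [hconst e x hx, hU]

variable [Fintype V]

theorem graphInner_eq_sum_netInflow_sub (hℓ : ∀ e, 0 ≤ ℓ e) {u u' φ φ' : E → ℝ → ℝ} {Φ : V → ℝ}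
    (hu : ∀ e, IsPrimitiveOn (u e) (u' e) 0 (ℓ e))
    (hu' : ∀ e, IntervalIntegrable (u' e) volume 0 (ℓ e))
    (hφ : ∀ e, IsPrimitiveOn (φ e) (φ' e) 0 (ℓ e))
    (hφ' : ∀ e, IntervalIntegrable (φ' e) volume 0 (ℓ e))
    (hsrc : ∀ e, φ e 0 = Φ (src e)) (hdst : ∀ e, φ e (ℓ e) = Φ (dst e)) :
    graphInner ℓ u φ' = ∑ v, Φ v * netInflow src dst (fun e => u e (ℓ e)) (fun e => u e 0) v
      - graphInner ℓ u' φ := by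
  rw [← sum_mul_dst_sub_mul_src src dst, graphInner, graphInner, ← Finset.sum_sub_distrib]
  refine Finset.sum_congr rfl fun e _ => ?_
  rw [(hu e).setIntegral_mul_eq (hℓ e) (hφ e) (hu' e) (hφ' e), hsrc, hdst]

variable {R g f : E → ℝ → ℝ} {fV : V → ℝ}

theorem isPrimalSolution_of_kirchhoff (hℓ : ∀ e, 0 ≤ ℓ e) (hR : EdgewiseMemLp ℓ ⊤ R)
    (hg : EdgewiseMemLp ℓ 2 g) (hf : EdgewiseMemLp ℓ 2 f) {q p p' : E → ℝ → ℝ} {P : V → ℝ}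
    (hq : ∀ e, IsPrimitiveOn (q e) (f e) 0 (ℓ e)) (hp' : p' = g - R * q)
    (hp : ∀ e, IsPrimitiveOn (p e) (p' e) 0 (ℓ e)) (hsrc : ∀ e, p e 0 = P (src e))
    (hdst : ∀ e, p e (ℓ e) = P (dst e)) (hbd : ∀ v, degree src dst v = 1 → P v = 0)
    (hkirchhoff : ∀ v, degree src dst v ≠ 1 →
      netInflow src dst (fun e => q e (ℓ e)) (fun e => q e 0) v = -fV v) :
    IsPrimalSolution src dst ℓ R g f fV q p p' P := by
  have hfi : ∀ e, IntervalIntegrable (f e) volume 0 (ℓ e) := fun e =>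
    hf.intervalIntegrable one_le_two (hℓ e)
  have hq2 : EdgewiseMemLp ℓ 2 q := IsPrimitiveOn.edgewiseMemLp hℓ hq hfi
  have hp'2 : EdgewiseMemLp ℓ 2 p' := hp' ▸ hg.sub (hR.mul hq2)
  refine ⟨hq2, hp, hp'2, hsrc, hdst, hbd, fun ψ hψ => ?_,
    fun φ φ' Φ hφ (hφ' : EdgewiseMemLp ℓ 2 φ') hφsrc hφdst hΦ => ?_⟩
  · show graphInner ℓ (R * q) ψ + graphInner ℓ p' ψ = graphInner ℓ g ψ
    rw [hp', graphInner_sub_left hg (hR.mul hq2) hψ, add_sub_cancel]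
  · show graphInner ℓ q φ' = -graphInner ℓ f φ - ∑ v, fV v * Φ v
    have hvertex : ∀ v, Φ v * netInflow src dst (fun e => q e (ℓ e)) (fun e => q e 0) v
        = -(fV v * Φ v) := fun v => by
      by_cases hv : degree src dst v = 1
      · simp [hΦ v hv]
      · rw [hkirchhoff v hv]; ring
    rw [graphInner_eq_sum_netInflow_sub hℓ hq hfi hφ
      (fun e => hφ'.intervalIntegrable one_le_two (hℓ e)) hφsrc hφdst,
      Finset.sum_congr rfl fun v _ => hvertex v, Finset.sum_neg_distrib]
    ring

theorem exists_isPrimalSolution (hℓ : ∀ e, 0 < ℓ e) (hreach : ∀ v, BoundaryReachable src dst v)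
    (hR : EdgewiseMemLp ℓ ⊤ R) (hRpos : ∀ e, ∀ᵐ s ∂volume.restrict (Ioo 0 (ℓ e)), 0 < R e s)
    (hg : EdgewiseMemLp ℓ 2 g) (hf : EdgewiseMemLp ℓ 2 f) (fV : V → ℝ) :
    ∃ q p p' P, IsPrimalSolution src dst ℓ R g f fV q p p' P := by
  have hℓ' : ∀ e, 0 ≤ ℓ e := fun e => (hℓ e).le
  have hfi : ∀ e, IntervalIntegrable (f e) volume 0 (ℓ e) := fun e =>
    hf.intervalIntegrable one_le_two (hℓ' e)
  set F : E → ℝ → ℝ := fun e x => ∫ t in 0..x, f e t with hF_def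
  have hF : ∀ e, IsPrimitiveOn (F e) (f e) 0 (ℓ e) := fun e => isPrimitiveOn_integral (hfi e)
  have hF2 : EdgewiseMemLp ℓ 2 F := IsPrimitiveOn.edgewiseMemLp hℓ' hF hfi
  have hA : ∀ e, 0 < ∫ s in Ioo 0 (ℓ e), R e s := fun e =>
    haveI : NeZero (volume.restrict (Ioo 0 (ℓ e))) := ⟨by simp [hℓ e]⟩
    integral_pos_of_ae_pos ((hR e).integrable le_top) (hRpos e)
  obtain ⟨α, P, hbd, hdrop, hkirchhoff⟩ := exists_kirchhoff_solution src dst hreach hA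
    (fun e => ∫ s in Ioo 0 (ℓ e), (g - R * F) e s) (fun e => F e (ℓ e)) fV
  set q : E → ℝ → ℝ := fun e s => α e + F e s with hq_def
  have hq : ∀ e, IsPrimitiveOn (q e) (f e) 0 (ℓ e) := fun e => (hF e).const_add (α e)
  have hp' : EdgewiseMemLp ℓ 2 (g - R * q) :=
    hg.sub (hR.mul (IsPrimitiveOn.edgewiseMemLp hℓ' hq hfi))
  refine ⟨q, fun e x => P (src e) + ∫ t in 0..x, (g - R * q) e t, g - R * q, P,
    isPrimalSolution_of_kirchhoff hℓ' hR hg hf hq rfl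
      (fun e => (isPrimitiveOn_integral (hp'.intervalIntegrable one_le_two (hℓ' e))).const_add _)
      (fun e => by simp) (fun e => ?_) hbd fun v hv => ?_⟩
  · have hsplit : (g - R * q) e = fun s => (g - R * F) e s - α e * R e s :=
      funext fun s => by simp only [Pi.sub_apply, Pi.mul_apply, hq_def]; ring
    rw [intervalIntegral.integral_of_le (hℓ' e), integral_Ioc_eq_integral_Ioo, hsplit,
      integral_sub (((hg.sub (hR.mul hF2)) e).integrable one_le_two)
        (((hR e).integrable le_top).const_mul _), MeasureTheory.integral_const_mul, hdrop]
    ring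
  · simpa [hq_def, hF_def] using hkirchhoff v hv

theorem IsPrimalSolution.sub_ae_eq_zero (hℓ : ∀ e, 0 ≤ ℓ e) (hR : EdgewiseMemLp ℓ ⊤ R)
    (hRpos : ∀ e, ∀ᵐ s ∂volume.restrict (Ioo 0 (ℓ e)), 0 < R e s)
    {q p p' q₂ p₂ p₂' : E → ℝ → ℝ} {P P₂ : V → ℝ}
    (h : IsPrimalSolution src dst ℓ R g f fV q p p' P)
    (h₂ : IsPrimalSolution src dst ℓ R g f fV q₂ p₂ p₂' P₂) :
    (∀ e, (q - q₂) e =ᵐ[volume.restrict (Ioo 0 (ℓ e))] 0) ∧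
      ∀ e, (p' - p₂') e =ᵐ[volume.restrict (Ioo 0 (ℓ e))] 0 := by
  obtain ⟨(hq : EdgewiseMemLp ℓ 2 q), (hp : ∀ e, IsPrimitiveOn (p e) (p' e) 0 (ℓ e)),
    (hp' : EdgewiseMemLp ℓ 2 p'), hsrc, hdst, hbd, hmom, hmass⟩ := h
  obtain ⟨(hq₂ : EdgewiseMemLp ℓ 2 q₂), (hp₂ : ∀ e, IsPrimitiveOn (p₂ e) (p₂' e) 0 (ℓ e)),
    (hp₂' : EdgewiseMemLp ℓ 2 p₂'), hsrc₂, hdst₂, hbd₂, hmom₂, hmass₂⟩ := h₂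
  have hmomΔ : ∀ ψ, EdgewiseMemLp ℓ 2 ψ →
      graphInner ℓ (R * (q - q₂)) ψ + graphInner ℓ (p' - p₂') ψ = 0 := fun ψ hψ => by
    have h₁ : graphInner ℓ (R * q) ψ + graphInner ℓ p' ψ = graphInner ℓ g ψ := hmom ψ hψ
    have h₂ : graphInner ℓ (R * q₂) ψ + graphInner ℓ p₂' ψ = graphInner ℓ g ψ := hmom₂ ψ hψ
    rw [mul_sub, graphInner_sub_left (hR.mul hq) (hR.mul hq₂) hψ,
      graphInner_sub_left hp' hp₂' hψ]
    linarith
  have hΔp : ∀ e, IsPrimitiveOn ((p - p₂) e) ((p' - p₂') e) 0 (ℓ e) := fun e =>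
    (hp e).sub (hp₂ e) (hp'.intervalIntegrable one_le_two (hℓ e))
      (hp₂'.intervalIntegrable one_le_two (hℓ e))
  have hΔsrc : ∀ e, (p - p₂) e 0 = (P - P₂) (src e) := fun e => by simp [hsrc, hsrc₂]
  have hΔdst : ∀ e, (p - p₂) e (ℓ e) = (P - P₂) (dst e) := fun e => by simp [hdst, hdst₂]
  have hΔbd : ∀ v, degree src dst v = 1 → (P - P₂) v = 0 := fun v hv => by
    simp [hbd v hv, hbd₂ v hv]
  have hmassΔ : graphInner ℓ (q - q₂) (p' - p₂') = 0 := by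
    have h₁ : graphInner ℓ q (p' - p₂') = _ := hmass _ _ _ hΔp (hp'.sub hp₂') hΔsrc hΔdst hΔbd
    have h₂ : graphInner ℓ q₂ (p' - p₂') = _ :=
      hmass₂ _ _ _ hΔp (hp'.sub hp₂') hΔsrc hΔdst hΔbd
    rw [graphInner_sub_left hq hq₂ (hp'.sub hp₂'), h₁, h₂, sub_self]
  have hΔq := ae_eq_zero_of_graphInner_mul_self_eq_zero hRpos hR (hq.sub hq₂) <| by
    linarith [hmomΔ _ (hq.sub hq₂), graphInner_comm (ℓ := ℓ) (p' - p₂') (q - q₂)]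
  refine ⟨hΔq, ae_eq_zero_of_graphInner_mul_self_eq_zero (w := 1)
    (fun _ => ae_of_all _ fun _ => one_pos) (fun _ => memLp_const 1) (hp'.sub hp₂') ?_⟩
  have hRΔq : ∀ e, (R * (q - q₂)) e =ᵐ[volume.restrict (Ioo 0 (ℓ e))] 0 := fun e =>
    (hΔq e).mono fun s hs => by simp only [Pi.mul_apply, hs, Pi.zero_apply, mul_zero]
  rw [one_mul]
  simpa only [graphInner_eq_zero_of_ae_eq_zero hRΔq, zero_add] using hmomΔ _ (hp'.sub hp₂')

theorem IsPrimalSolution.unique (hℓ : ∀ e, 0 ≤ ℓ e) (hreach : ∀ v, BoundaryReachable src dst v)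
    (hR : EdgewiseMemLp ℓ ⊤ R) (hRpos : ∀ e, ∀ᵐ s ∂volume.restrict (Ioo 0 (ℓ e)), 0 < R e s)
    {q p p' q₂ p₂ p₂' : E → ℝ → ℝ} {P P₂ : V → ℝ}
    (h : IsPrimalSolution src dst ℓ R g f fV q p p' P)
    (h₂ : IsPrimalSolution src dst ℓ R g f fV q₂ p₂ p₂' P₂) :
    (∀ e, ∀ᵐ s ∂volume.restrict (Ioo 0 (ℓ e)), q e s = q₂ e s) ∧
      ∀ e, ∀ x ∈ Icc 0 (ℓ e), p e x = p₂ e x := by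
  obtain ⟨hΔq, hΔp'⟩ := h.sub_ae_eq_zero hℓ hR hRpos h₂
  refine ⟨fun e => (hΔq e).mono fun s hs => sub_eq_zero.1 hs, fun e x hx => sub_eq_zero.1 ?_⟩
  obtain ⟨-, (hp : ∀ e, IsPrimitiveOn (p e) (p' e) 0 (ℓ e)), (hp' : EdgewiseMemLp ℓ 2 p'), hsrc,
    hdst, hbd, -⟩ := h
  obtain ⟨-, (hp₂ : ∀ e, IsPrimitiveOn (p₂ e) (p₂' e) 0 (ℓ e)), (hp₂' : EdgewiseMemLp ℓ 2 p₂'),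
    hsrc₂, hdst₂, hbd₂, -⟩ := h₂
  exact eq_zero_of_isPrimitiveOn_of_ae_eq_zero hℓ hreach (u := p - p₂) (U := P - P₂)
    (fun e => (hp e).sub (hp₂ e) (hp'.intervalIntegrable one_le_two (hℓ e))
      (hp₂'.intervalIntegrable one_le_two (hℓ e))) hΔp'
    (fun e => by simp [hsrc, hsrc₂]) (fun e => by simp [hdst, hdst₂])
    (fun v hv => by simp [hbd v hv, hbd₂ v hv]) e hx

end PrimalProblem

/-- Well-posedness of the primal formulation of the hydraulic network model:
on a finite oriented metric graph in which every vertex is boundary-reachable, with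
measurable resistances bounded above and below by positive constants and `L²` data,
there exists a primal solution, and it is unique in the sense that the flux is unique
almost everywhere on every edge and the pressure is unique everywhere on every edge. -/
theorem primal_hydraulic_wellposed
    {E V : Type*} [Fintype E] [Fintype V] [DecidableEq V]
    (src dst : E → V) (ℓ : E → ℝ) (hℓ : ∀ e, 0 < ℓ e)
    (hreach : ∀ v : V, BoundaryReachable src dst v)
    (R : E → ℝ → ℝ) (Rmin Rmax : ℝ) (hRmin : 0 < Rmin)
    (hRmeas : ∀ e, Measurable (R e))
    (hRbound : ∀ e, ∀ s ∈ Set.Icc (0:ℝ) (ℓ e), Rmin ≤ R e s ∧ R e s ≤ Rmax)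
    (g f : E → ℝ → ℝ)
    (hg : ∀ e, MemLp (g e) 2 (volume.restrict (Set.Ioo (0:ℝ) (ℓ e))))
    (hf : ∀ e, MemLp (f e) 2 (volume.restrict (Set.Ioo (0:ℝ) (ℓ e))))
    (fV : V → ℝ) :
    (∃ q p p' P, IsPrimalSolution src dst ℓ R g f fV q p p' P) ∧
    (∀ q p p' P q₂ p₂ p₂' P₂,
      IsPrimalSolution src dst ℓ R g f fV q p p' P →
      IsPrimalSolution src dst ℓ R g f fV q₂ p₂ p₂' P₂ →
      (∀ e, ∀ᵐ s ∂(volume.restrict (Set.Ioo (0:ℝ) (ℓ e))), q e s = q₂ e s) ∧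
      (∀ e, ∀ x ∈ Set.Icc (0:ℝ) (ℓ e), p e x = p₂ e x)) := by
  have hR : EdgewiseMemLp ℓ ⊤ R := fun e =>
    memLp_top_of_bound (hRmeas e).aestronglyMeasurable Rmax <| by
      filter_upwards [ae_restrict_mem measurableSet_Ioo] with s hs
      obtain ⟨hlo, hhi⟩ := hRbound e s (Ioo_subset_Icc_self hs)
      rwa [Real.norm_of_nonneg (hRmin.le.trans hlo)]
  have hRpos : ∀ e, ∀ᵐ s ∂volume.restrict (Ioo 0 (ℓ e)), 0 < R e s := fun e => by
    filter_upwards [ae_restrict_mem measurableSet_Ioo] with s hs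
    exact hRmin.trans_le (hRbound e s (Ioo_subset_Icc_self hs)).1
  exact ⟨exists_isPrimalSolution hℓ hreach hR hRpos hg hf fV,
    fun _ _ _ _ _ _ _ _ h h₂ => h.unique (fun e => (hℓ e).le) hreach hR hRpos h₂⟩
end

section
/- Let (α, μ) be a measure space, let w : α → ℝ be measurable with w(x) > 0 for μ-almost every x, and let g : α → ℝ be measurable with x ↦ w(x)^{-1/2} g(x) square-integrable and not almost everywhere zero. Then the function q := w⁻¹ g satisfies: x ↦ w(x)^{1/2} q(x) is square-integrable, ∫ q g dμ = ‖w^{-1/2} g‖²_{L²(μ)}, and ‖w^{1/2} q‖_{L²(μ)} = ‖w^{-1/2} g‖_{L²(μ)}. Consequently, the supremum of (∫ q' g dμ) / ‖w^{1/2} q'‖_{L²(μ)} over all measurable q' with w^{1/2} q' square-integrable and ‖w^{1/2} q'‖_{L²(μ)} ≠ 0 equals ‖w^{-1/2} g‖_{L²(μ)}; in particular the inf-sup constant of the weighted pairing is 1, independently of the measure space and the weight. -/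
open MeasureTheory
open scoped ENNReal

/-!
Writing `q g = (√w q) · (w^{-1/2} g)`, the pairing `∫ q g` is an `L²(μ)` inner product of
`√w q` with the fixed function `w^{-1/2} g`, so Cauchy–Schwarz bounds the quotient
`(∫ q g) / ‖√w q‖` by `‖w^{-1/2} g‖`; the choice `q = w⁻¹ g` makes `√w q = w^{-1/2} g`,
which is the equality case.
-/

namespace MeasureTheory.MemLp

variable {α : Type*} [MeasurableSpace α] {μ : Measure α} {f h : α → ℝ}

theorem integral_mul_eq_inner_toLp (hf : MemLp f 2 μ) (hh : MemLp h 2 μ) :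
    ∫ x, f x * h x ∂μ = inner ℝ (hf.toLp f) (hh.toLp h) := by
  rw [L2.inner_def]
  refine integral_congr_ae ?_
  filter_upwards [hf.coeFn_toLp, hh.coeFn_toLp] with x hfx hhx
  simp [hfx, hhx, mul_comm]

theorem integral_mul_le_toReal_eLpNorm_mul (hf : MemLp f 2 μ) (hh : MemLp h 2 μ) :
    ∫ x, f x * h x ∂μ ≤ (eLpNorm f 2 μ).toReal * (eLpNorm h 2 μ).toReal := by
  rw [hf.integral_mul_eq_inner_toLp hh, ← Lp.norm_toLp f hf, ← Lp.norm_toLp h hh]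
  exact real_inner_le_norm _ _

theorem integral_mul_self_eq_toReal_eLpNorm_sq (hf : MemLp f 2 μ) :
    ∫ x, f x * f x ∂μ = (eLpNorm f 2 μ).toReal ^ 2 := by
  rw [hf.integral_mul_eq_inner_toLp hf, real_inner_self_eq_norm_sq, Lp.norm_toLp]

end MeasureTheory.MemLp

namespace Real

variable {a b : ℝ}

theorem sqrt_mul_inv_mul_eq_div_sqrt (ha : 0 < a) : √a * (a⁻¹ * b) = b / √a := by
  have hsqrt : √a ≠ 0 := (sqrt_pos.2 ha).ne'
  field_simp
  rw [sq_sqrt ha.le]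

theorem inv_mul_mul_self_eq_div_sqrt_mul_self (ha : 0 < a) :
    a⁻¹ * b * b = b / √a * (b / √a) := by
  have hsqrt : √a ≠ 0 := (sqrt_pos.2 ha).ne'
  field_simp
  rw [sq_sqrt ha.le, mul_comm]

theorem mul_eq_sqrt_mul_mul_div_sqrt (ha : 0 < a) (q : ℝ) : q * b = √a * q * (b / √a) := by
  have hsqrt : √a ≠ 0 := (sqrt_pos.2 ha).ne'
  field_simp

end Real

section WeightedPairing

variable {α : Type*} [MeasurableSpace α] {μ : Measure α} {w g : α → ℝ}

theorem integral_mul_le_weighted_eLpNorm_mul (hwpos : ∀ᵐ x ∂μ, 0 < w x) {q : α → ℝ}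
    (hq : MemLp (fun x => √(w x) * q x) 2 μ) (hg : MemLp (fun x => g x / √(w x)) 2 μ) :
    ∫ x, q x * g x ∂μ ≤ (eLpNorm (fun x => √(w x) * q x) 2 μ).toReal
      * (eLpNorm (fun x => g x / √(w x)) 2 μ).toReal := by
  have hsplit : ∫ x, q x * g x ∂μ = ∫ x, √(w x) * q x * (g x / √(w x)) ∂μ :=
    integral_congr_ae <| hwpos.mono fun x hx => Real.mul_eq_sqrt_mul_mul_div_sqrt hx (q x)
  exact hsplit ▸ hq.integral_mul_le_toReal_eLpNorm_mul hg

end WeightedPairing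

/-- The weighted inf-sup identity underlying the Brezzi inf-sup condition for the primal
mixed hydraulic network formulation: on any measure space, with an a.e. positive
measurable weight `w` and measurable `g` with `w^{-1/2} g ∈ L²` not a.e. zero, the
function `q = w⁻¹ g` satisfies `w^{1/2} q ∈ L²`, `∫ q g = ‖w^{-1/2} g‖²`,
`‖w^{1/2} q‖ = ‖w^{-1/2} g‖`, and the supremum of `(∫ q' g) / ‖w^{1/2} q'‖` over all
admissible `q'` is attained and equals `‖w^{-1/2} g‖`. -/
theorem weighted_pairing_infsup
    {α : Type*} [MeasurableSpace α] (μ : Measure α)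
    (w : α → ℝ) (hw : Measurable w) (hwpos : ∀ᵐ x ∂μ, 0 < w x)
    (g : α → ℝ) (hg : Measurable g)
    (hg2 : MemLp (fun x => g x / Real.sqrt (w x)) 2 μ)
    (hgne : ¬ ((fun x => g x / Real.sqrt (w x)) =ᵐ[μ] 0)) :
    MemLp (fun x => Real.sqrt (w x) * ((w x)⁻¹ * g x)) 2 μ ∧
    (∫ x, ((w x)⁻¹ * g x) * g x ∂μ
      = ((eLpNorm (fun x => g x / Real.sqrt (w x)) 2 μ).toReal) ^ 2) ∧
    (eLpNorm (fun x => Real.sqrt (w x) * ((w x)⁻¹ * g x)) 2 μ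
      = eLpNorm (fun x => g x / Real.sqrt (w x)) 2 μ) ∧
    IsGreatest
      {r : ℝ | ∃ q' : α → ℝ, Measurable q' ∧
        MemLp (fun x => Real.sqrt (w x) * q' x) 2 μ ∧
        eLpNorm (fun x => Real.sqrt (w x) * q' x) 2 μ ≠ 0 ∧
        r = (∫ x, q' x * g x ∂μ)
          / (eLpNorm (fun x => Real.sqrt (w x) * q' x) 2 μ).toReal}
      ((eLpNorm (fun x => g x / Real.sqrt (w x)) 2 μ).toReal) := by
  have hopt : (fun x => √(w x) * ((w x)⁻¹ * g x)) =ᵐ[μ] fun x => g x / √(w x) :=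
    hwpos.mono fun x hx => Real.sqrt_mul_inv_mul_eq_div_sqrt hx
  have hmem := (memLp_congr_ae hopt).2 hg2
  have hnorm := eLpNorm_congr_ae (p := 2) hopt
  have hint : ∫ x, (w x)⁻¹ * g x * g x ∂μ = (eLpNorm (fun x => g x / √(w x)) 2 μ).toReal ^ 2 := by
    rw [← hg2.integral_mul_self_eq_toReal_eLpNorm_sq]
    exact integral_congr_ae <| hwpos.mono fun x hx => Real.inv_mul_mul_self_eq_div_sqrt_mul_self hx
  have hne : eLpNorm (fun x => g x / √(w x)) 2 μ ≠ 0 :=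
    mt (eLpNorm_eq_zero_iff hg2.1 two_ne_zero).1 hgne
  refine ⟨hmem, hint, hnorm, ⟨fun x => (w x)⁻¹ * g x, hw.inv.mul hg, hmem, hnorm ▸ hne, ?_⟩, ?_⟩
  · rw [hint, hnorm, sq, mul_div_cancel_right₀ _ (ENNReal.toReal_ne_zero.2 ⟨hne, hg2.2.ne⟩)]
  · rintro r ⟨q, -, hq, hqne, rfl⟩
    rw [div_le_iff₀ (ENNReal.toReal_pos hqne hq.2.ne), mul_comm]
    exact integral_mul_le_weighted_eLpNorm_mul hwpos hq hg2
end

section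
/- Let a finite oriented metric graph be given in which every vertex is boundary-reachable, and let L = ∑_{e ∈ E} ℓ e denote its total length. Let p = (p_e) be a family of functions, each continuously differentiable on [0, ℓ e], continuous across vertices with vertex values P : V → ℝ, and with P(v) = 0 at every boundary vertex. Then ∑_{e ∈ E} ∫₀^{ℓ e} p_e(s)² ds ≤ L² · ∑_{e ∈ E} ∫₀^{ℓ e} p_e'(s)² ds (a Poincaré inequality on the network, with constant depending only on the total length). -/
open MeasureTheory intervalIntegral
open scoped BigOperators

/-!
Write `A e = ∫₀^{ℓ e} |p_e'|`, so that `p_e` oscillates by at most `A e` on its edge. Every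
edge `e` has an endpoint joined to a boundary vertex by a path of the underlying simple graph
that avoids `e`; telescoping along the distinct edges of that path bounds `|P|` at this
endpoint by `∑_{f ≠ e} A f`, hence `|p_e| ≤ ∑_f A f` on the whole edge. Cauchy–Schwarz on each
edge gives `(A e)² ≤ ℓ e ∫ (p_e')²`, and Cauchy–Schwarz over the edges then gives
`(∑_f A f)² ≤ L ∑_e ∫ (p_e')²`.
-/

section Interval

variable {f f' : ℝ → ℝ} {a b : ℝ}

lemma abs_sub_le_integral_abs_deriv
    (hf : ∀ s ∈ Set.Icc a b, HasDerivWithinAt f (f' s) (Set.Icc a b) s)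
    (hf' : ContinuousOn f' (Set.Icc a b)) {x y : ℝ} (hx : x ∈ Set.Icc a b)
    (hy : y ∈ Set.Icc a b) :
    |f x - f y| ≤ ∫ s in a..b, |f' s| := by
  wlog hxy : x ≤ y generalizing x y
  · rw [abs_sub_comm]; exact this hy hx (le_of_not_ge hxy)
  have hsub : Set.Icc x y ⊆ Set.Icc a b := Set.Icc_subset_Icc hx.1 hy.2
  have hftc : ∫ s in x..y, f' s = f y - f x := by
    refine integral_eq_sub_of_hasDeriv_right_of_le hxy
      (fun s hs => (hf s (hsub hs)).continuousWithinAt.mono hsub) (fun s hs => ?_)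
      ((hf'.mono hsub).intervalIntegrable_of_Icc hxy)
    exact (hf s (hsub (Set.Ioo_subset_Icc_self hs))).mono_of_mem_nhdsWithin
      (Icc_mem_nhdsGT_of_mem ⟨hx.1.trans hs.1.le, hs.2.trans_le hy.2⟩)
  rw [abs_sub_comm, ← hftc]
  calc |∫ s in x..y, f' s| ≤ ∫ s in x..y, |f' s| := abs_integral_le_integral_abs hxy
    _ ≤ ∫ s in a..b, |f' s| :=
      integral_mono_interval hx.1 hxy hy.2 (Filter.Eventually.of_forall fun _ => abs_nonneg _)
        (hf'.abs.intervalIntegrable_of_Icc (hx.1.trans (hxy.trans hy.2)))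

lemma sq_integral_abs_le_mul_integral_sq (hab : a ≤ b) (hf : ContinuousOn f (Set.Icc a b)) :
    (∫ s in a..b, |f s|) ^ 2 ≤ (b - a) * ∫ s in a..b, f s ^ 2 := by
  set I := ∫ s in a..b, |f s|
  set J := ∫ s in a..b, f s ^ 2
  have hI : IntervalIntegrable (fun s => |f s|) volume a b := hf.abs.intervalIntegrable_of_Icc hab
  have hJ : IntervalIntegrable (fun s => f s ^ 2) volume a b :=
    (hf.pow 2).intervalIntegrable_of_Icc hab
  -- expand `0 ≤ ∫ ((b - a) |f| - I)²`
  have hexpand : ∫ s in a..b, ((b - a) * |f s| - I) ^ 2 = (b - a) * ((b - a) * J - I ^ 2) := by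
    have hsq : ∀ s, ((b - a) * |f s| - I) ^ 2 = (b - a) ^ 2 * f s ^ 2 - 2 * (b - a) * I * |f s|
        + I ^ 2 := fun s => by rw [sub_sq, mul_pow, sq_abs]; ring
    simp_rw [hsq]
    rw [integral_add ((hJ.const_mul _).sub (hI.const_mul _)) intervalIntegrable_const,
      integral_sub (hJ.const_mul _) (hI.const_mul _), intervalIntegral.integral_const_mul,
      intervalIntegral.integral_const_mul, intervalIntegral.integral_const, smul_eq_mul]
    ring
  have hnonneg : 0 ≤ (b - a) * ((b - a) * J - I ^ 2) :=
    hexpand ▸ integral_nonneg hab fun _ _ => sq_nonneg _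
  rcases hab.eq_or_lt with rfl | hlt
  · simp [I]
  · nlinarith [sub_pos.mpr hlt]

lemma integral_sq_le_mul_sq_of_abs_le (hab : a ≤ b) {M : ℝ}
    (hM : ∀ s ∈ Set.Icc a b, |f s| ≤ M) :
    ∫ s in a..b, f s ^ 2 ≤ (b - a) * M ^ 2 := by
  have hbound : ∀ s ∈ Set.uIoc a b, ‖f s ^ 2‖ ≤ M ^ 2 := fun s hs => by
    rw [Set.uIoc_of_le hab] at hs
    rw [Real.norm_eq_abs, abs_pow]
    exact pow_le_pow_left₀ (abs_nonneg _) (hM s (Set.Ioc_subset_Icc_self hs)) 2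
  calc ∫ s in a..b, f s ^ 2 ≤ ‖∫ s in a..b, f s ^ 2‖ := Real.le_norm_self _
    _ ≤ M ^ 2 * |b - a| := norm_integral_le_of_norm_le_const hbound
    _ = (b - a) * M ^ 2 := by rw [abs_of_nonneg (sub_nonneg.mpr hab), mul_comm]

end Interval

namespace SimpleGraph

variable {V : Type*} {G : SimpleGraph V}

lemma Walk.abs_sub_le_sum_map_edges (φ : V → ℝ) (c : Sym2 V → ℝ)
    (hc : ∀ x y, G.Adj x y → |φ x - φ y| ≤ c s(x, y)) {u v : V} (w : G.Walk u v) :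
    |φ u - φ v| ≤ (w.edges.map c).sum := by
  induction w with
  | nil => simp
  | cons h q ih =>
    rw [Walk.edges_cons, List.map_cons, List.sum_cons]
    exact (abs_sub_le _ _ _).trans (add_le_add (hc _ _ h) ih)

lemma Reachable.exists_reachable_deleteEdges {x y b : V} (h : G.Reachable x b) :
    ∃ u, (u = x ∨ u = y) ∧ (G.deleteEdges {s(x, y)}).Reachable u b := by
  have key : ∀ v, G.Reachable v b → (G.deleteEdges {s(x, y)}).Reachable v b ∨
      ∃ u, (u = x ∨ u = y) ∧ (G.deleteEdges {s(x, y)}).Reachable u b := by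
    clear h
    rintro v ⟨w⟩
    induction w with
    | nil => exact Or.inl Reachable.rfl
    | @cons v v' _ hadj _ ih =>
      rcases ih with hv' | hu
      · by_cases he : s(v, v') = s(x, y)
        · exact Or.inr ⟨v', by rcases Sym2.eq_iff.mp he with h | h <;> simp [h], hv'⟩
        · exact Or.inl ((deleteEdges_adj.mpr ⟨hadj, he⟩).reachable.trans hv')
      · exact Or.inr hu
  exact (key x h).elim (fun hx => ⟨x, Or.inl rfl, hx⟩) id

end SimpleGraph

section Network

variable {E V : Type*} (src dst : E → V)

def networkGraph : SimpleGraph V :=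
  SimpleGraph.fromRel fun x y => ∃ e, src e = x ∧ dst e = y

lemma networkGraph_reachable_of_reflTransGen {v b : V}
    (h : Relation.ReflTransGen
      (fun x y => ∃ e, (src e = x ∧ dst e = y) ∨ (src e = y ∧ dst e = x)) v b) :
    (networkGraph src dst).Reachable v b := by
  induction h with
  | refl => exact SimpleGraph.Reachable.rfl
  | @tail y z _ hyz ih =>
    obtain ⟨e, he⟩ := hyz
    by_cases hne : y = z
    · exact hne ▸ ih
    · exact ih.trans (SimpleGraph.Adj.reachable
        ⟨hne, he.imp (⟨e, ·⟩) (⟨e, ·⟩)⟩)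

lemma exists_endpoint_abs_le_sum_erase [Fintype E] [DecidableEq E] [DecidableEq V] (A : E → ℝ)
    (hA : ∀ e, 0 ≤ A e) (P : V → ℝ) (hP : ∀ e, |P (src e) - P (dst e)| ≤ A e)
    (hzero : ∀ v, ∃ b, (networkGraph src dst).Reachable v b ∧ P b = 0) (e₀ : E) :
    ∃ v, (v = src e₀ ∨ v = dst e₀) ∧ |P v| ≤ ∑ e ∈ Finset.univ.erase e₀, A e := by
  set G' := (networkGraph src dst).deleteEdges {s(src e₀, dst e₀)}
  -- an edge of the simple graph carries the total weight of the network edges above it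
  let c : Sym2 V → ℝ := fun z => ∑ e, if s(src e, dst e) = z then A e else 0
  have hc : ∀ x y, G'.Adj x y → |P x - P y| ≤ c s(x, y) := by
    intro x y hxy
    obtain ⟨e, he⟩ : ∃ e, s(src e, dst e) = s(x, y) := by
      obtain ⟨e, hx, hy⟩ | ⟨e, hy, hx⟩ := (SimpleGraph.deleteEdges_adj.mp hxy).1.2
      exacts [⟨e, by rw [hx, hy]⟩, ⟨e, by rw [hx, hy, Sym2.eq_swap]⟩]
    have hPe : |P x - P y| ≤ A e := by
      rcases Sym2.eq_iff.mp he with ⟨hx, hy⟩ | ⟨hy, hx⟩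
      · rw [← hx, ← hy]; exact hP e
      · rw [← hx, ← hy, abs_sub_comm]; exact hP e
    calc |P x - P y| ≤ A e := hPe
      _ = if s(src e, dst e) = s(x, y) then A e else 0 := (if_pos he).symm
      _ ≤ c s(x, y) :=
        Finset.single_le_sum (f := fun f => if s(src f, dst f) = s(x, y) then A f else 0)
          (fun f _ => by split_ifs; exacts [hA f, le_rfl]) (Finset.mem_univ e)
  obtain ⟨b, hb, hPb⟩ := hzero (src e₀)
  obtain ⟨v, hv, ⟨w⟩⟩ := hb.exists_reachable_deleteEdges (y := dst e₀)
  refine ⟨v, hv, ?_⟩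
  have hpath := w.bypass_isPath
  have he₀ : s(src e₀, dst e₀) ∉ w.bypass.edges := fun h =>
    (SimpleGraph.deleteEdges_adj.mp ((SimpleGraph.mem_edgeSet _).mp
      (w.bypass.edges_subset_edgeSet h))).2 rfl
  set T := w.bypass.edges.toFinset
  calc |P v| = |P v - P b| := by rw [hPb, sub_zero]
    _ ≤ (w.bypass.edges.map c).sum := w.bypass.abs_sub_le_sum_map_edges P c hc
    _ = ∑ z ∈ T, c z := (List.sum_toFinset c hpath.isTrail.edges_nodup).symm
    _ = ∑ e ∈ Finset.univ.filter (fun e => s(src e, dst e) ∈ T), A e := by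
      rw [Finset.sum_comm, Finset.sum_filter]
      simp only [Finset.sum_ite_eq]
    _ ≤ ∑ e ∈ Finset.univ.erase e₀, A e := by
      refine Finset.sum_le_sum_of_subset_of_nonneg (fun e he => ?_) (fun e _ _ => hA e)
      refine Finset.mem_erase.mpr ⟨fun h => he₀ ?_, Finset.mem_univ e⟩
      subst h
      exact List.mem_toFinset.mp (Finset.mem_filter.mp he).2

lemma abs_le_sum_integral_abs_deriv [Fintype E] [DecidableEq V] {ℓ : E → ℝ}
    (hℓ : ∀ e, 0 ≤ ℓ e) {p p' : E → ℝ → ℝ}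
    (hp : ∀ e, ∀ s ∈ Set.Icc 0 (ℓ e), HasDerivWithinAt (p e) (p' e s) (Set.Icc 0 (ℓ e)) s)
    (hp' : ∀ e, ContinuousOn (p' e) (Set.Icc 0 (ℓ e))) {P : V → ℝ}
    (hPsrc : ∀ e, p e 0 = P (src e)) (hPdst : ∀ e, p e (ℓ e) = P (dst e))
    (hzero : ∀ v, ∃ b, (networkGraph src dst).Reachable v b ∧ P b = 0)
    (e : E) {s : ℝ} (hs : s ∈ Set.Icc 0 (ℓ e)) :
    |p e s| ≤ ∑ f, ∫ t in (0:ℝ)..(ℓ f), |p' f t| := by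
  classical
  set A : E → ℝ := fun f => ∫ t in (0:ℝ)..(ℓ f), |p' f t|
  have hA : ∀ f, 0 ≤ A f := fun f => integral_nonneg (hℓ f) fun _ _ => abs_nonneg _
  have hosc : ∀ f, ∀ x ∈ Set.Icc 0 (ℓ f), ∀ y ∈ Set.Icc 0 (ℓ f), |p f x - p f y| ≤ A f :=
    fun f _ hx _ hy => abs_sub_le_integral_abs_deriv (hp f) (hp' f) hx hy
  have hends : ∀ f, |P (src f) - P (dst f)| ≤ A f := fun f => by
    rw [← hPsrc, ← hPdst, abs_sub_comm]
    exact hosc f _ (Set.right_mem_Icc.mpr (hℓ f)) _ (Set.left_mem_Icc.mpr (hℓ f))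
  obtain ⟨v, hv, hPv⟩ := exists_endpoint_abs_le_sum_erase src dst A hA P hends hzero e
  obtain ⟨t, ht, hpt⟩ : ∃ t ∈ Set.Icc 0 (ℓ e), p e t = P v := by
    rcases hv with rfl | rfl
    exacts [⟨0, Set.left_mem_Icc.mpr (hℓ e), hPsrc e⟩,
      ⟨ℓ e, Set.right_mem_Icc.mpr (hℓ e), hPdst e⟩]
  calc |p e s|
      ≤ |p e s - p e t| + |p e t| := by simpa using abs_add_le (p e s - p e t) (p e t)
    _ ≤ A e + ∑ f ∈ Finset.univ.erase e, A f := add_le_add (hosc e s hs t ht) (hpt ▸ hPv)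
    _ = ∑ f, A f := Finset.add_sum_erase _ _ (Finset.mem_univ e)

end Network

theorem network_poincare_general
    {E V : Type*} [Fintype E] [DecidableEq V]
    (src dst : E → V) (ℓ : E → ℝ) (hℓ : ∀ e, 0 < ℓ e)
    (hreach : ∀ v : V, BoundaryReachable src dst v)
    (p p' : E → ℝ → ℝ)
    (hp : ∀ e, ∀ s ∈ Set.Icc (0:ℝ) (ℓ e),
      HasDerivWithinAt (p e) (p' e s) (Set.Icc (0:ℝ) (ℓ e)) s)
    (hp' : ∀ e, ContinuousOn (p' e) (Set.Icc (0:ℝ) (ℓ e)))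
    (P : V → ℝ)
    (hPsrc : ∀ e, p e 0 = P (src e))
    (hPdst : ∀ e, p e (ℓ e) = P (dst e))
    (hP0 : ∀ v, degree src dst v = 1 → P v = 0) :
    (∑ e, ∫ s in (0:ℝ)..(ℓ e), (p e s) ^ 2)
      ≤ (∑ e, ℓ e) ^ 2 * ∑ e, ∫ s in (0:ℝ)..(ℓ e), (p' e s) ^ 2 := by
  set L := ∑ e, ℓ e
  set M := ∑ e, ∫ s in (0:ℝ)..(ℓ e), |p' e s|
  have hsup : ∀ e, ∀ s ∈ Set.Icc 0 (ℓ e), |p e s| ≤ M := fun e _ hs =>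
    abs_le_sum_integral_abs_deriv src dst (fun e => (hℓ e).le) hp hp' hPsrc hPdst
      (fun v => (hreach v).imp fun b hb =>
        ⟨networkGraph_reachable_of_reflTransGen src dst hb.1, hP0 b hb.2⟩) e hs
  have hCS : M ^ 2 ≤ L * ∑ e, ∫ s in (0:ℝ)..(ℓ e), (p' e s) ^ 2 :=
    Finset.sum_sq_le_sum_mul_sum_of_sq_le_mul _ (fun e _ => (hℓ e).le)
      (fun e _ => integral_nonneg (hℓ e).le fun _ _ => sq_nonneg _)
      (fun e _ => by simpa using sq_integral_abs_le_mul_integral_sq (hℓ e).le (hp' e))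
  calc (∑ e, ∫ s in (0:ℝ)..(ℓ e), (p e s) ^ 2)
      ≤ ∑ e, ℓ e * M ^ 2 := Finset.sum_le_sum fun e _ => by
        simpa using integral_sq_le_mul_sq_of_abs_le (hℓ e).le (hsup e)
    _ = L * M ^ 2 := (Finset.sum_mul ..).symm
    _ ≤ L * (L * ∑ e, ∫ s in (0:ℝ)..(ℓ e), (p' e s) ^ 2) :=
      mul_le_mul_of_nonneg_left hCS (Finset.sum_nonneg fun e _ => (hℓ e).le)
    _ = L ^ 2 * ∑ e, ∫ s in (0:ℝ)..(ℓ e), (p' e s) ^ 2 := by ring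

/-- Poincaré inequality on a network: on a finite oriented metric graph of total length
`L` in which every vertex is boundary-reachable, every edgewise continuously
differentiable family `p`, continuous across vertices with vertex values vanishing at
boundary vertices, satisfies
`∑_e ∫₀^{ℓ e} p_e² ≤ L² ∑_e ∫₀^{ℓ e} (p_e')²`. -/
theorem network_poincare
    {E V : Type*} [Fintype E] [Fintype V] [DecidableEq V]
    (src dst : E → V) (ℓ : E → ℝ) (hℓ : ∀ e, 0 < ℓ e)
    (hreach : ∀ v : V, BoundaryReachable src dst v)
    (p p' : E → ℝ → ℝ)
    (hp : ∀ e, ∀ s ∈ Set.Icc (0:ℝ) (ℓ e),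
      HasDerivWithinAt (p e) (p' e s) (Set.Icc (0:ℝ) (ℓ e)) s)
    (hp' : ∀ e, ContinuousOn (p' e) (Set.Icc (0:ℝ) (ℓ e)))
    (P : V → ℝ)
    (hPsrc : ∀ e, p e 0 = P (src e))
    (hPdst : ∀ e, p e (ℓ e) = P (dst e))
    (hP0 : ∀ v, degree src dst v = 1 → P v = 0) :
    (∑ e, ∫ s in (0:ℝ)..(ℓ e), (p e s) ^ 2)
      ≤ (∑ e, ℓ e) ^ 2 * ∑ e, ∫ s in (0:ℝ)..(ℓ e), (p' e s) ^ 2 :=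
  network_poincare_general src dst ℓ hℓ hreach p p' hp hp' P hPsrc hPdst hP0
end

section
/- Let a finite oriented metric graph be given, and let (q, p) be a primal solution of the hydraulic network problem with resistances R_e, edge data g_e, f_e ∈ L²(0, ℓ e) and vertex data f_V. Then: (1) for every edge e there is an absolutely continuous function q̃_e on [0, ℓ e] with q̃_e = q_e almost everywhere and q̃_e'(s) = f_e(s) for almost every s (i.e. q belongs edgewise to H¹); (2) R_e q_e + p_e' = g_e almost everywhere on every edge; and (3) if moreover each R_e is constant on its edge and each g_e is absolutely continuous on [0, ℓ e] with derivative in L²(0, ℓ e), then each p_e' agrees almost everywhere with an absolutely continuous function whose derivative lies in L²(0, ℓ e) (i.e. p belongs edgewise to H²). -/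
open MeasureTheory intervalIntegral
open scoped BigOperators

section AuxHydraulic
open Set

lemma aux_mul_int {μ : Measure ℝ} {a b : ℝ → ℝ} (ha : MemLp a 2 μ) (hb : MemLp b 2 μ) :
    Integrable (fun s => a s * b s) μ :=
  memLp_one_iff_integrable.mp (by
    have := hb.smul (𝕜 := ℝ) ha (r := 1) (hpqr := ⟨by rw [inv_one]; exact ENNReal.inv_two_add_inv_two⟩)
    exact this)

lemma aux_sq_zero {μ : Measure ℝ} {h : ℝ → ℝ} (hh : MemLp h 2 μ)
    (hz : ∫ s, h s * h s ∂μ = 0) : ∀ᵐ s ∂μ, h s = 0 := by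
  have hint : Integrable (fun s => h s * h s) μ := aux_mul_int hh hh
  have hnn : 0 ≤ᵐ[μ] fun s => h s * h s := Filter.Eventually.of_forall fun s => mul_self_nonneg _
  have := (integral_eq_zero_iff_of_nonneg_ae hnn hint).mp hz
  filter_upwards [this] with s hs
  exact mul_self_eq_zero.mp hs

lemma aux_interval_int {L : ℝ} {w : ℝ → ℝ} (hw : MemLp w 2 (volume.restrict (Ioo (0:ℝ) L)))
    {x y : ℝ} (hx : x ∈ Icc (0:ℝ) L) (hy : y ∈ Icc (0:ℝ) L) :
    IntervalIntegrable w volume x y := by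
  haveI : IsFiniteMeasure (volume.restrict (Ioo (0:ℝ) L)) :=
    ⟨by simp [Measure.restrict_apply_univ]⟩
  have h1 : IntegrableOn w (Ioo (0:ℝ) L) volume := hw.integrable (by norm_num)
  have h2 : IntegrableOn w (Icc (0:ℝ) L) volume := by
    rwa [IntegrableOn, Measure.restrict_congr_set Ioo_ae_eq_Icc] at h1
  exact (h2.mono_set (Set.uIcc_subset_Icc hx hy)).intervalIntegrable

lemma aux_ibp {L : ℝ} {u v : ℝ → ℝ}
    (hu : IntegrableOn u (Ioo (0:ℝ) L)) (hv : IntegrableOn v (Ioo (0:ℝ) L)) :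
    (∫ s in Ioo (0:ℝ) L, u s * ∫ t in Ioo (0:ℝ) s, v t)
      + (∫ s in Ioo (0:ℝ) L, (∫ t in Ioo (0:ℝ) s, u t) * v s)
      = (∫ t in Ioo (0:ℝ) L, u t) * (∫ t in Ioo (0:ℝ) L, v t) := by
  set μ := volume.restrict (Ioo (0:ℝ) L) with hμ
  set F : ℝ × ℝ → ℝ := fun z => u z.1 * v z.2 with hFdef
  have hF : Integrable F (μ.prod μ) := hu.mul_prod hv
  have hA : MeasurableSet {z : ℝ × ℝ | z.2 < z.1} :=
    measurableSet_lt measurable_snd measurable_fst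
  have h1 : Integrable ({z : ℝ × ℝ | z.2 < z.1}.indicator F) (μ.prod μ) := hF.indicator hA
  have h2 : Integrable ({z : ℝ × ℝ | z.2 < z.1}ᶜ.indicator F) (μ.prod μ) := hF.indicator hA.compl
  have hsplit : (∫ z, F z ∂(μ.prod μ))
      = (∫ z, {z : ℝ × ℝ | z.2 < z.1}.indicator F z ∂(μ.prod μ))
        + ∫ z, {z : ℝ × ℝ | z.2 < z.1}ᶜ.indicator F z ∂(μ.prod μ) := by
    rw [← integral_add h1 h2]
    congr 1
    ext z
    simp [Set.indicator_self_add_compl_apply]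
  have hprod : (∫ z, F z ∂(μ.prod μ)) = (∫ t in Ioo (0:ℝ) L, u t) * ∫ t in Ioo (0:ℝ) L, v t :=
    integral_prod_mul u v
  have hI1 : (∫ z, {z : ℝ × ℝ | z.2 < z.1}.indicator F z ∂(μ.prod μ))
      = ∫ s in Ioo (0:ℝ) L, u s * ∫ t in Ioo (0:ℝ) s, v t := by
    rw [integral_prod _ h1]
    refine integral_congr_ae ?_
    filter_upwards [ae_restrict_mem measurableSet_Ioo] with s hs
    have heq : (fun t => ({z : ℝ × ℝ | z.2 < z.1}.indicator F) (s, t))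
        = (Iio s).indicator (fun t => u s * v t) := by
      ext t; by_cases h : t < s <;> simp [Set.indicator, h, hFdef]
    have hset : Iio s ∩ Ioo 0 L = Ioo 0 s := by
      ext t
      simp only [mem_inter_iff, mem_Iio, mem_Ioo]
      exact ⟨fun ⟨a, b, _⟩ => ⟨b, a⟩, fun ⟨a, b⟩ => ⟨b, a, b.trans hs.2⟩⟩
    rw [heq, MeasureTheory.integral_indicator measurableSet_Iio, hμ,
      Measure.restrict_restrict measurableSet_Iio, hset, MeasureTheory.integral_const_mul]
  have hI2 : (∫ z, {z : ℝ × ℝ | z.2 < z.1}ᶜ.indicator F z ∂(μ.prod μ))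
      = ∫ s in Ioo (0:ℝ) L, (∫ t in Ioo (0:ℝ) s, u t) * v s := by
    rw [integral_prod_symm _ h2]
    refine integral_congr_ae ?_
    filter_upwards [ae_restrict_mem measurableSet_Ioo] with t ht
    have heq : (fun s => ({z : ℝ × ℝ | z.2 < z.1}ᶜ.indicator F) (s, t))
        = (Iic t).indicator (fun s => u s * v t) := by
      ext s
      by_cases h : t < s
      · simp [Set.indicator, h, not_le.mpr h]
      · simp [Set.indicator, h, not_lt.mp h, hFdef]
    have hset : Iic t ∩ Ioo 0 L = Ioc 0 t := by
      ext s
      simp only [mem_inter_iff, mem_Iic, mem_Ioo, mem_Ioc]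
      exact ⟨fun ⟨a, b, _⟩ => ⟨b, a⟩, fun ⟨a, b⟩ => ⟨b, a, lt_of_le_of_lt b ht.2⟩⟩
    rw [heq, MeasureTheory.integral_indicator measurableSet_Iic, hμ,
      Measure.restrict_restrict measurableSet_Iic, hset,
      (Measure.restrict_congr_set MeasureTheory.Ioo_ae_eq_Ioc).symm, MeasureTheory.integral_mul_const]
  rw [hsplit, hI1, hI2] at hprod
  exact hprod

lemma aux_prim_memL2 {L : ℝ} (hL : 0 < L) {w : ℝ → ℝ}
    (hw : MemLp w 2 (volume.restrict (Ioo (0:ℝ) L))) :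
    MemLp (fun x => ∫ t in (0:ℝ)..x, w t) 2 (volume.restrict (Ioo (0:ℝ) L)) := by
  haveI : IsFiniteMeasure (volume.restrict (Ioo (0:ℝ) L)) :=
    ⟨by simp [Measure.restrict_apply_univ]⟩
  have hii : IntervalIntegrable w volume 0 L :=
    aux_interval_int hw ⟨le_refl 0, hL.le⟩ ⟨hL.le, le_refl L⟩
  have hcont : ContinuousOn (fun x => ∫ t in (0:ℝ)..x, w t) (Icc (0:ℝ) L) := by
    have := intervalIntegral.continuousOn_primitive_interval' hii
      (a := 0) Set.left_mem_uIcc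
    rwa [Set.uIcc_of_le hL.le] at this
  obtain ⟨C, hC⟩ := isCompact_Icc.exists_bound_of_continuousOn hcont
  refine MemLp.of_bound
    ((hcont.mono Ioo_subset_Icc_self).aestronglyMeasurable measurableSet_Ioo) C ?_
  filter_upwards [ae_restrict_mem measurableSet_Ioo] with x hx
  exact hC x (Ioo_subset_Icc_self hx)

end AuxHydraulic

/-- Higher regularity of primal solutions of the hydraulic network problem:
(1) the flux `q` has, on every edge, an absolutely continuous representative whose
derivative is `f_e` almost everywhere (edgewise `H¹`);
(2) the momentum equation `R_e q_e + p_e' = g_e` holds almost everywhere on every edge;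
(3) if each resistance is constant on its edge and each `g_e` is absolutely continuous
with derivative in `L²`, then each `p_e'` agrees a.e. with an absolutely continuous
function whose derivative lies in `L²` (edgewise `H²`). -/
theorem primal_higher_regularity
    {E V : Type*} [Fintype E] [Fintype V] [DecidableEq V]
    (src dst : E → V) (ℓ : E → ℝ) (hℓ : ∀ e, 0 < ℓ e)
    (R : E → ℝ → ℝ) (Rmin Rmax : ℝ) (hRmin : 0 < Rmin)
    (hRmeas : ∀ e, Measurable (R e))
    (hRbound : ∀ e, ∀ s ∈ Set.Icc (0:ℝ) (ℓ e), Rmin ≤ R e s ∧ R e s ≤ Rmax)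
    (g f : E → ℝ → ℝ)
    (hg : ∀ e, MemLp (g e) 2 (volume.restrict (Set.Ioo (0:ℝ) (ℓ e))))
    (hf : ∀ e, MemLp (f e) 2 (volume.restrict (Set.Ioo (0:ℝ) (ℓ e))))
    (fV : V → ℝ)
    (q p p' : E → ℝ → ℝ) (P : V → ℝ)
    (hsol : IsPrimalSolution src dst ℓ R g f fV q p p' P) :
    -- (1) edgewise H¹ regularity of the flux
    (∀ e, ∃ qt : ℝ → ℝ,
      (∀ᵐ s ∂(volume.restrict (Set.Ioo (0:ℝ) (ℓ e))), qt s = q e s) ∧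
      (∀ x ∈ Set.Icc (0:ℝ) (ℓ e), ∀ y ∈ Set.Icc (0:ℝ) (ℓ e),
        qt y - qt x = ∫ s in x..y, f e s)) ∧
    -- (2) the momentum equation holds a.e. on every edge
    (∀ e, ∀ᵐ s ∂(volume.restrict (Set.Ioo (0:ℝ) (ℓ e))),
      R e s * q e s + p' e s = g e s) ∧
    -- (3) edgewise H² regularity of the pressure
    ((∀ e, ∃ c : ℝ, ∀ s ∈ Set.Icc (0:ℝ) (ℓ e), R e s = c) →
      (∀ e, ∃ g' : ℝ → ℝ,
        (∀ x ∈ Set.Icc (0:ℝ) (ℓ e), ∀ y ∈ Set.Icc (0:ℝ) (ℓ e),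
          g e y - g e x = ∫ s in x..y, g' s) ∧
        MemLp g' 2 (volume.restrict (Set.Ioo (0:ℝ) (ℓ e)))) →
      (∀ e, ∃ w w' : ℝ → ℝ,
        (∀ x ∈ Set.Icc (0:ℝ) (ℓ e), ∀ y ∈ Set.Icc (0:ℝ) (ℓ e),
          w y - w x = ∫ s in x..y, w' s) ∧
        MemLp w' 2 (volume.restrict (Set.Ioo (0:ℝ) (ℓ e))) ∧
        (∀ᵐ s ∂(volume.restrict (Set.Ioo (0:ℝ) (ℓ e))), p' e s = w s))) := by
  classical
  obtain ⟨hq, hpFTC, hp', hp0, hpl, hPbd, hmom, hmass⟩ := hsol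
  -- Part (2): the momentum equation holds a.e.
  have part2 : ∀ e, ∀ᵐ s ∂(volume.restrict (Set.Ioo (0:ℝ) (ℓ e))),
      R e s * q e s + p' e s = g e s := by
    intro e₀
    have hRq : MemLp (fun s => R e₀ s * q e₀ s) 2
        (volume.restrict (Set.Ioo (0:ℝ) (ℓ e₀))) := by
      refine (hq e₀).of_le_mul (c := Rmax)
        ((hRmeas e₀).aestronglyMeasurable.mul (hq e₀).1) ?_
      filter_upwards [ae_restrict_mem measurableSet_Ioo] with s hs
      have hb := hRbound e₀ s (Set.Ioo_subset_Icc_self hs)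
      calc ‖R e₀ s * q e₀ s‖ = ‖R e₀ s‖ * ‖q e₀ s‖ := norm_mul _ _
        _ ≤ Rmax * ‖q e₀ s‖ := by
            apply mul_le_mul_of_nonneg_right _ (norm_nonneg _)
            rw [Real.norm_eq_abs, abs_of_nonneg (le_trans hRmin.le hb.1)]
            exact hb.2
    set h : ℝ → ℝ := fun s => R e₀ s * q e₀ s + p' e₀ s - g e₀ s with hh
    have hhL2 : MemLp h 2 (volume.restrict (Set.Ioo (0:ℝ) (ℓ e₀))) :=
      (hRq.add (hp' e₀)).sub (hg e₀)
    set ψ : E → ℝ → ℝ := fun e s => if e = e₀ then h s else 0 with hψdef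
    have hψ : ∀ e, MemLp (ψ e) 2 (volume.restrict (Set.Ioo (0:ℝ) (ℓ e))) := by
      intro e; by_cases he : e = e₀
      · subst he; simpa [hψdef] using hhL2
      · simpa [hψdef, he] using (zero_memLp :
          MemLp (0 : ℝ → ℝ) 2 (volume.restrict (Set.Ioo (0:ℝ) (ℓ e))))
    have key := hmom ψ hψ
    have h1 : (∑ e, ∫ s in Set.Ioo (0:ℝ) (ℓ e), R e s * q e s * ψ e s)
        = ∫ s in Set.Ioo (0:ℝ) (ℓ e₀), R e₀ s * q e₀ s * h s := by
      rw [Finset.sum_eq_single_of_mem e₀ (Finset.mem_univ _)]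
      · simp [hψdef]
      · intro e _ he; simp [hψdef, he]
    have h2 : (∑ e, ∫ s in Set.Ioo (0:ℝ) (ℓ e), p' e s * ψ e s)
        = ∫ s in Set.Ioo (0:ℝ) (ℓ e₀), p' e₀ s * h s := by
      rw [Finset.sum_eq_single_of_mem e₀ (Finset.mem_univ _)]
      · simp [hψdef]
      · intro e _ he; simp [hψdef, he]
    have h3 : (∑ e, ∫ s in Set.Ioo (0:ℝ) (ℓ e), g e s * ψ e s)
        = ∫ s in Set.Ioo (0:ℝ) (ℓ e₀), g e₀ s * h s := by
      rw [Finset.sum_eq_single_of_mem e₀ (Finset.mem_univ _)]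
      · simp [hψdef]
      · intro e _ he; simp [hψdef, he]
    rw [h1, h2, h3] at key
    have hint1 : Integrable (fun s => R e₀ s * q e₀ s * h s)
        (volume.restrict (Set.Ioo (0:ℝ) (ℓ e₀))) := aux_mul_int hRq hhL2
    have hint2 : Integrable (fun s => p' e₀ s * h s)
        (volume.restrict (Set.Ioo (0:ℝ) (ℓ e₀))) := aux_mul_int (hp' e₀) hhL2
    have hint3 : Integrable (fun s => g e₀ s * h s)
        (volume.restrict (Set.Ioo (0:ℝ) (ℓ e₀))) := aux_mul_int (hg e₀) hhL2
    have hzero : ∫ s in Set.Ioo (0:ℝ) (ℓ e₀), h s * h s = 0 := by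
      have hpt : (fun s => h s * h s)
          = fun s => (R e₀ s * q e₀ s * h s + p' e₀ s * h s) - g e₀ s * h s := by
        funext s; simp only [hh]; ring
      have hint12 : Integrable (fun s => R e₀ s * q e₀ s * h s + p' e₀ s * h s)
          (volume.restrict (Set.Ioo (0:ℝ) (ℓ e₀))) := hint1.add hint2
      rw [hpt, integral_sub hint12 hint3, integral_add hint1 hint2, key, sub_self]
    have hae := aux_sq_zero hhL2 hzero
    filter_upwards [hae] with s hs
    have hs' : R e₀ s * q e₀ s + p' e₀ s - g e₀ s = 0 := hs
    linarith
  -- Part (1): edgewise H¹ regularity of the flux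
  have part1 : ∀ e, ∃ qt : ℝ → ℝ,
      (∀ᵐ s ∂(volume.restrict (Set.Ioo (0:ℝ) (ℓ e))), qt s = q e s) ∧
      (∀ x ∈ Set.Icc (0:ℝ) (ℓ e), ∀ y ∈ Set.Icc (0:ℝ) (ℓ e),
        qt y - qt x = ∫ s in x..y, f e s) := by
    intro e₀
    haveI : IsFiniteMeasure (volume.restrict (Set.Ioo (0:ℝ) (ℓ e₀))) :=
      ⟨by simp [Measure.restrict_apply_univ]⟩
    have h0L : (0:ℝ) ∈ Set.Icc (0:ℝ) (ℓ e₀) := ⟨le_refl 0, (hℓ e₀).le⟩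
    have hLL : ℓ e₀ ∈ Set.Icc (0:ℝ) (ℓ e₀) := ⟨(hℓ e₀).le, le_refl _⟩
    set F : ℝ → ℝ := fun x => ∫ t in (0:ℝ)..x, f e₀ t with hFdef
    have hFL2 : MemLp F 2 (volume.restrict (Set.Ioo (0:ℝ) (ℓ e₀))) :=
      aux_prim_memL2 (hℓ e₀) (hf e₀)
    have hqF : MemLp (fun s => q e₀ s - F s) 2 (volume.restrict (Set.Ioo (0:ℝ) (ℓ e₀))) :=
      (hq e₀).sub hFL2
    set c : ℝ := (∫ s in Set.Ioo (0:ℝ) (ℓ e₀), (q e₀ s - F s)) / ℓ e₀ with hcdef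
    set h : ℝ → ℝ := fun s => q e₀ s - F s - c with hh
    have hhL2 : MemLp h 2 (volume.restrict (Set.Ioo (0:ℝ) (ℓ e₀))) :=
      hqF.sub (memLp_const c)
    have hmean : ∫ s in Set.Ioo (0:ℝ) (ℓ e₀), h s = 0 := by
      have : (∫ s in Set.Ioo (0:ℝ) (ℓ e₀), h s)
          = (∫ s in Set.Ioo (0:ℝ) (ℓ e₀), (q e₀ s - F s))
            - ∫ _ in Set.Ioo (0:ℝ) (ℓ e₀), c := by
        rw [← integral_sub (hqF.integrable one_le_two) (integrable_const c)]
      rw [this, setIntegral_const, Real.volume_real_Ioo_of_le (hℓ e₀).le, sub_zero,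
        hcdef, smul_eq_mul]
      have hne : ℓ e₀ ≠ 0 := ne_of_gt (hℓ e₀)
      field_simp
      simp
    -- test function for the mass equation, supported on the edge e₀
    set φ₀ : ℝ → ℝ := fun x => ∫ t in (0:ℝ)..x, h t with hφ₀def
    set φ : E → ℝ → ℝ := fun e => if e = e₀ then φ₀ else fun _ => 0 with hφdef
    set φ' : E → ℝ → ℝ := fun e => if e = e₀ then h else fun _ => 0 with hφ'def
    have hφFTC : ∀ e, ∀ x ∈ Set.Icc (0:ℝ) (ℓ e), ∀ y ∈ Set.Icc (0:ℝ) (ℓ e),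
        φ e y - φ e x = ∫ s in x..y, φ' e s := by
      intro e x hx y hy
      by_cases he : e = e₀
      · subst he
        simp only [hφdef, hφ'def, if_pos rfl, hφ₀def]
        exact integral_interval_sub_left (aux_interval_int hhL2 h0L hy)
          (aux_interval_int hhL2 h0L hx)
      · simp [hφdef, hφ'def, he]
    have hφ'L2 : ∀ e, MemLp (φ' e) 2 (volume.restrict (Set.Ioo (0:ℝ) (ℓ e))) := by
      intro e; by_cases he : e = e₀
      · subst he; simpa [hφ'def] using hhL2
      · simpa [hφ'def, he] using (zero_memLp :
          MemLp (0 : ℝ → ℝ) 2 (volume.restrict (Set.Ioo (0:ℝ) (ℓ e))))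
    have hφ0 : ∀ e, φ e 0 = (fun _ : V => (0:ℝ)) (src e) := by
      intro e; by_cases he : e = e₀
      · subst he; simp [hφdef, hφ₀def]
      · simp [hφdef, he]
    have hφl : ∀ e, φ e (ℓ e) = (fun _ : V => (0:ℝ)) (dst e) := by
      intro e; by_cases he : e = e₀
      · subst he
        simp only [hφdef, if_pos rfl, hφ₀def]
        rw [intervalIntegral.integral_of_le (hℓ e).le, integral_Ioc_eq_integral_Ioo, hmean]
      · simp [hφdef, he]
    have key := hmass φ φ' (fun _ => 0) hφFTC hφ'L2 hφ0 hφl (fun _ _ => rfl)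
    have h1 : (∑ e, ∫ s in Set.Ioo (0:ℝ) (ℓ e), q e s * φ' e s)
        = ∫ s in Set.Ioo (0:ℝ) (ℓ e₀), q e₀ s * h s := by
      rw [Finset.sum_eq_single_of_mem e₀ (Finset.mem_univ _)]
      · simp [hφ'def]
      · intro e _ he; simp [hφ'def, he]
    have h2 : (∑ e, ∫ s in Set.Ioo (0:ℝ) (ℓ e), f e s * φ e s)
        = ∫ s in Set.Ioo (0:ℝ) (ℓ e₀), f e₀ s * φ₀ s := by
      rw [Finset.sum_eq_single_of_mem e₀ (Finset.mem_univ _)]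
      · simp [hφdef]
      · intro e _ he; simp [hφdef, he]
    have h3 : (∑ v : V, fV v * (fun _ : V => (0:ℝ)) v) = 0 := by simp
    rw [h1, h2, h3, sub_zero] at key
    -- integration by parts
    have hfInt : IntegrableOn (f e₀) (Set.Ioo (0:ℝ) (ℓ e₀)) volume :=
      (hf e₀).integrable one_le_two
    have hhInt : IntegrableOn h (Set.Ioo (0:ℝ) (ℓ e₀)) volume :=
      hhL2.integrable one_le_two
    have ibp := aux_ibp hfInt hhInt
    have e1 : (∫ s in Set.Ioo (0:ℝ) (ℓ e₀), f e₀ s * ∫ t in Set.Ioo (0:ℝ) s, h t)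
        = ∫ s in Set.Ioo (0:ℝ) (ℓ e₀), f e₀ s * φ₀ s := by
      refine setIntegral_congr_fun measurableSet_Ioo fun s hs => ?_
      rw [hφ₀def]
      simp only []
      rw [intervalIntegral.integral_of_le hs.1.le, integral_Ioc_eq_integral_Ioo]
    have e2 : (∫ s in Set.Ioo (0:ℝ) (ℓ e₀), (∫ t in Set.Ioo (0:ℝ) s, f e₀ t) * h s)
        = ∫ s in Set.Ioo (0:ℝ) (ℓ e₀), F s * h s := by
      refine setIntegral_congr_fun measurableSet_Ioo fun s hs => ?_
      rw [hFdef]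
      simp only []
      rw [intervalIntegral.integral_of_le hs.1.le, integral_Ioc_eq_integral_Ioo]
    rw [e1, e2, hmean, mul_zero] at ibp
    -- hence ∫ q h = ∫ F h
    have hqh : (∫ s in Set.Ioo (0:ℝ) (ℓ e₀), q e₀ s * h s)
        = ∫ s in Set.Ioo (0:ℝ) (ℓ e₀), F s * h s := by
      rw [key]; linarith
    have hint1 : Integrable (fun s => q e₀ s * h s)
        (volume.restrict (Set.Ioo (0:ℝ) (ℓ e₀))) := aux_mul_int (hq e₀) hhL2
    have hint2 : Integrable (fun s => F s * h s)
        (volume.restrict (Set.Ioo (0:ℝ) (ℓ e₀))) := aux_mul_int hFL2 hhL2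
    have hint3 : Integrable (fun s => c * h s)
        (volume.restrict (Set.Ioo (0:ℝ) (ℓ e₀))) := aux_mul_int (memLp_const c) hhL2
    have hzero : ∫ s in Set.Ioo (0:ℝ) (ℓ e₀), h s * h s = 0 := by
      have hpt : (fun s => h s * h s)
          = fun s => q e₀ s * h s - F s * h s - c * h s := by
        funext s; simp only [hh]; ring
      have hint12 : Integrable (fun s => q e₀ s * h s - F s * h s)
          (volume.restrict (Set.Ioo (0:ℝ) (ℓ e₀))) := hint1.sub hint2
      rw [hpt, integral_sub hint12 hint3, integral_sub hint1 hint2, hqh, sub_self,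
        zero_sub, MeasureTheory.integral_const_mul, hmean, mul_zero, neg_zero]
    have hae := aux_sq_zero hhL2 hzero
    refine ⟨fun x => F x + c, ?_, ?_⟩
    · filter_upwards [hae] with s hs
      have hs' : q e₀ s - F s - c = 0 := hs
      linarith
    · intro x hx y hy
      have : F y + c - (F x + c) = F y - F x := by ring
      rw [this, hFdef]
      simp only []
      exact integral_interval_sub_left (aux_interval_int (hf e₀) h0L hy)
        (aux_interval_int (hf e₀) h0L hx)
  refine ⟨part1, part2, ?_⟩
  -- Part (3): edgewise H² regularity of the pressure
  intro hRc hgreg e₀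
  obtain ⟨cR, hcR⟩ := hRc e₀
  obtain ⟨g', hg'FTC, hg'L2⟩ := hgreg e₀
  obtain ⟨qt, hqt_ae, hqtFTC⟩ := part1 e₀
  refine ⟨fun s => g e₀ s - cR * qt s, fun s => g' s - cR * f e₀ s, ?_, ?_, ?_⟩
  · intro x hx y hy
    have hw : (g e₀ y - cR * qt y) - (g e₀ x - cR * qt x)
        = (g e₀ y - g e₀ x) - cR * (qt y - qt x) := by ring
    rw [hw, hg'FTC x hx y hy, hqtFTC x hx y hy,
      ← intervalIntegral.integral_const_mul, ← intervalIntegral.integral_sub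
        (aux_interval_int hg'L2 hx hy) ((aux_interval_int (hf e₀) hx hy).const_mul cR)]
  · exact hg'L2.sub ((hf e₀).const_mul cR)
  · filter_upwards [part2 e₀, hqt_ae, ae_restrict_mem measurableSet_Ioo] with s h2 hqt hs
    have hR' : R e₀ s = cR := hcR s (Set.Ioo_subset_Icc_self hs)
    rw [hR', ← hqt] at h2
    linarith
end

section
/- Let a finite oriented metric graph be given, and let q = (q_e) be a family of functions, each continuously differentiable on [0, ℓ e]. For a vertex v, let d_v = #{e | src e = v} + #{e | dst e = v} be its degree. Then for every vertex v, ⟦q⟧_v² ≤ d_v · ( ∑_{e : dst e = v} T_e + ∑_{e : src e = v} T_e ), where T_e = (1/(ℓ e)) ∫₀^{ℓ e} q_e² ds + 2 (∫₀^{ℓ e} q_e² ds)^{1/2} (∫₀^{ℓ e} q_e'² ds)^{1/2}. In particular, a family that is edgewise H¹ has finite, controlled jumps at all vertices, so the broken space H¹(ℰ) is contained in H(div; 𝒢). -/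
/-!
On an edge `[a, b]` the continuous function `f ^ 2` takes somewhere a value at most its mean
`(b - a)⁻¹ ∫ f ^ 2`. From that point to any `t`, the fundamental theorem of calculus for
`(f ^ 2)' = 2 f f'` and the Cauchy–Schwarz inequality bound the change of `f ^ 2` by
`2 ‖f‖₂ ‖f'‖₂`. This controls every endpoint value entering the jump `⟦q⟧_v`, a sum of `d_v` terms,
and the finite Cauchy–Schwarz inequality `(∑ᵢ xᵢ)² ≤ d_v ∑ᵢ xᵢ²` finishes the proof.
-/

open MeasureTheory intervalIntegral
open scoped BigOperators

/-- The jump of a family `q = (q_e)` of functions on the edges at a vertex `v`: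
`⟦q⟧_v = ∑_{e : dst e = v} q_e (ℓ e) − ∑_{e : src e = v} q_e 0`. -/
def jump {E V : Type*} [Fintype E] [DecidableEq V] (src dst : E → V) (ℓ : E → ℝ)
    (q : E → ℝ → ℝ) (v : V) : ℝ :=
  (∑ e ∈ Finset.univ.filter fun e => dst e = v, q e (ℓ e)) -
    ∑ e ∈ Finset.univ.filter fun e => src e = v, q e 0

open Set Finset

theorem sq_sum_sub_sum_le_card_add_card_mul {ι α : Type*} [CommRing α] [LinearOrder α]
    [IsStrictOrderedRing α] (A B : Finset ι) (x y : ι → α) :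
    (∑ i ∈ A, x i - ∑ i ∈ B, y i) ^ 2
      ≤ (#A + #B) * (∑ i ∈ A, x i ^ 2 + ∑ i ∈ B, y i ^ 2) := by
  have h := sq_sum_le_card_mul_sum_sq (s := A.disjSum B) (f := Sum.elim x (-y))
  simpa [sum_disjSum, card_disjSum, sub_eq_add_neg] using h

theorem integral_abs_mul_le_sqrt_mul_sqrt {α : Type*} [MeasurableSpace α] {μ : Measure α}
    {f g : α → ℝ} (hf : MemLp f 2 μ) (hg : MemLp g 2 μ) :
    ∫ x, |f x| * |g x| ∂μ ≤ √(∫ x, f x ^ 2 ∂μ) * √(∫ x, g x ^ 2 ∂μ) := by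
  have h := integral_mul_le_Lp_mul_Lq_of_nonneg Real.HolderConjugate.two_two
    (ae_of_all _ fun x => abs_nonneg (f x)) (ae_of_all _ fun x => abs_nonneg (g x))
    (by rw [ENNReal.ofReal_ofNat]; exact hf.abs) (by rw [ENNReal.ofReal_ofNat]; exact hg.abs)
  simpa [Real.sqrt_eq_rpow, Real.rpow_two] using h

section Interval

variable {a b : ℝ}

theorem memLp_two_restrict_Ioc_of_continuousOn {f : ℝ → ℝ} (hf : ContinuousOn f (Icc a b)) :
    MemLp f 2 (volume.restrict (Ioc a b)) :=
  (memLp_two_iff_integrable_sq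
      ((hf.mono Ioc_subset_Icc_self).aestronglyMeasurable measurableSet_Ioc)).2
    ((hf.pow 2).integrableOn_Icc.mono_set Ioc_subset_Icc_self)

theorem intervalIntegral.integral_abs_mul_le_sqrt_mul_sqrt (hab : a ≤ b) {f g : ℝ → ℝ}
    (hf : ContinuousOn f (Icc a b)) (hg : ContinuousOn g (Icc a b)) :
    ∫ x in a..b, |f x| * |g x| ≤ √(∫ x in a..b, f x ^ 2) * √(∫ x in a..b, g x ^ 2) := by
  simp only [integral_of_le hab]
  exact _root_.integral_abs_mul_le_sqrt_mul_sqrt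
    (memLp_two_restrict_Ioc_of_continuousOn hf) (memLp_two_restrict_Ioc_of_continuousOn hg)

theorem exists_mem_Icc_le_inv_mul_integral (hab : a < b) {g : ℝ → ℝ}
    (hg : ContinuousOn g (Icc a b)) : ∃ c ∈ Icc a b, g c ≤ (b - a)⁻¹ * ∫ x in a..b, g x := by
  obtain ⟨c, hc, h⟩ := exists_le_setAverage (μ := volume) (s := Ioc a b) (by simp [hab])
    (by simp) (hg.integrableOn_Icc.mono_set Ioc_subset_Icc_self)
  refine ⟨c, Ioc_subset_Icc_self hc, ?_⟩
  rwa [← uIoc_of_le hab.le, interval_average_eq, smul_eq_mul] at h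

theorem abs_integral_le_integral_abs_of_mem_Icc (hab : a ≤ b) {g : ℝ → ℝ}
    (hg : IntervalIntegrable g volume a b) {s t : ℝ} (hs : s ∈ Icc a b) (ht : t ∈ Icc a b) :
    |∫ x in s..t, g x| ≤ ∫ x in a..b, |g x| := by
  rw [integral_of_le hab]
  have hsub : uIoc s t ⊆ Ioc a b := by
    rw [← uIoc_of_le hab]
    exact uIoc_subset_uIoc_of_uIcc_subset_uIcc ((uIcc_of_le hab).symm ▸ uIcc_subset_Icc hs ht)
  calc |∫ x in s..t, g x| ≤ ∫ x in uIoc s t, |g x| := by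
        simpa only [Real.norm_eq_abs] using
          norm_integral_le_integral_norm_uIoc (f := g) (a := s) (b := t) (μ := volume)
    _ ≤ ∫ x in Ioc a b, |g x| :=
      setIntegral_mono_set hg.1.norm (ae_of_all _ fun x => abs_nonneg _) hsub.eventuallyLE

theorem integral_eq_sub_of_hasDerivWithinAt_Icc {g g' : ℝ → ℝ}
    (hg : ∀ x ∈ Icc a b, HasDerivWithinAt g (g' x) (Icc a b) x) {s t : ℝ}
    (hs : s ∈ Icc a b) (ht : t ∈ Icc a b) (hint : IntervalIntegrable g' volume s t) :
    ∫ x in s..t, g' x = g t - g s := by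
  have hsub : uIcc s t ⊆ Icc a b := uIcc_subset_Icc hs ht
  refine integral_eq_sub_of_hasDeriv_right
    (fun x hx => ((hg x (hsub hx)).continuousWithinAt).mono hsub) (fun x hx => ?_) hint
  have hx : x ∈ Ioo a b :=
    ⟨(le_min hs.1 ht.1).trans_lt hx.1, hx.2.trans_le (max_le hs.2 ht.2)⟩
  exact ((hg x (Ioo_subset_Icc_self hx)).hasDerivAt (Icc_mem_nhds hx.1 hx.2)).hasDerivWithinAt

theorem sq_le_inv_mul_integral_sq_add_two_mul_sqrt_mul_sqrt (hab : a < b) {f f' : ℝ → ℝ}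
    (hf : ∀ x ∈ Icc a b, HasDerivWithinAt f (f' x) (Icc a b) x)
    (hf' : ContinuousOn f' (Icc a b)) {t : ℝ} (ht : t ∈ Icc a b) :
    f t ^ 2 ≤ (b - a)⁻¹ * (∫ x in a..b, f x ^ 2)
      + 2 * √(∫ x in a..b, f x ^ 2) * √(∫ x in a..b, f' x ^ 2) := by
  have hfc : ContinuousOn f (Icc a b) := fun x hx => (hf x hx).continuousWithinAt
  have hff' : ContinuousOn (fun x => 2 * f x * f' x) (Icc a b) :=
    (continuousOn_const.mul hfc).mul hf'
  obtain ⟨c, hc, hc_le⟩ :=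
    exists_mem_Icc_le_inv_mul_integral hab (g := fun x => f x ^ 2) (hfc.pow 2)
  have hftc : ∫ x in c..t, 2 * f x * f' x = f t ^ 2 - f c ^ 2 := by
    refine integral_eq_sub_of_hasDerivWithinAt_Icc (g := fun x => f x ^ 2) (fun x hx => ?_) hc ht
      ((hff'.mono (uIcc_subset_Icc hc ht)).intervalIntegrable)
    simpa [mul_assoc] using (hf x hx).fun_pow 2
  have hint : IntervalIntegrable (fun x => 2 * f x * f' x) volume a b :=
    (hff'.mono (uIcc_of_le hab.le).subset).intervalIntegrable
  calc f t ^ 2 = f c ^ 2 + ∫ x in c..t, 2 * f x * f' x := by rw [hftc]; ring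
    _ ≤ (b - a)⁻¹ * (∫ x in a..b, f x ^ 2) + ∫ x in a..b, |2 * f x * f' x| :=
      add_le_add hc_le ((le_abs_self _).trans
        (abs_integral_le_integral_abs_of_mem_Icc hab.le hint hc ht))
    _ = (b - a)⁻¹ * (∫ x in a..b, f x ^ 2) + 2 * ∫ x in a..b, |f x| * |f' x| := by
      simp only [abs_mul, abs_two, mul_assoc, intervalIntegral.integral_const_mul]
    _ ≤ _ := by
      rw [mul_assoc 2]
      gcongr
      exact intervalIntegral.integral_abs_mul_le_sqrt_mul_sqrt hab.le hfc hf'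

end Interval

theorem jump_bound_general
    {E V : Type*} [Fintype E] [DecidableEq V]
    (src dst : E → V) (ℓ : E → ℝ) (hℓ : ∀ e, 0 < ℓ e)
    (q q' : E → ℝ → ℝ)
    (hq : ∀ e, ∀ s ∈ Set.Icc (0:ℝ) (ℓ e),
      HasDerivWithinAt (q e) (q' e s) (Set.Icc (0:ℝ) (ℓ e)) s)
    (hq' : ∀ e, ContinuousOn (q' e) (Set.Icc (0:ℝ) (ℓ e))) :
    ∀ v : V, (jump src dst ℓ q v) ^ 2
      ≤ (degree src dst v : ℝ) *
        ((∑ e ∈ Finset.univ.filter fun e => dst e = v,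
            ((1 / ℓ e) * (∫ s in (0:ℝ)..(ℓ e), (q e s) ^ 2)
              + 2 * Real.sqrt (∫ s in (0:ℝ)..(ℓ e), (q e s) ^ 2)
                  * Real.sqrt (∫ s in (0:ℝ)..(ℓ e), (q' e s) ^ 2)))
          + ∑ e ∈ Finset.univ.filter fun e => src e = v,
            ((1 / ℓ e) * (∫ s in (0:ℝ)..(ℓ e), (q e s) ^ 2)
              + 2 * Real.sqrt (∫ s in (0:ℝ)..(ℓ e), (q e s) ^ 2)
                  * Real.sqrt (∫ s in (0:ℝ)..(ℓ e), (q' e s) ^ 2))) := by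
  intro v
  have htrace : ∀ e, ∀ t ∈ Icc 0 (ℓ e), q e t ^ 2 ≤ (1 / ℓ e) * (∫ s in (0:ℝ)..(ℓ e), (q e s) ^ 2)
      + 2 * √(∫ s in (0:ℝ)..(ℓ e), (q e s) ^ 2) * √(∫ s in (0:ℝ)..(ℓ e), (q' e s) ^ 2) :=
    fun e t ht => by
      simpa only [sub_zero, one_div] using
        sq_le_inv_mul_integral_sq_add_two_mul_sqrt_mul_sqrt (hℓ e) (hq e) (hq' e) ht
  calc (jump src dst ℓ q v) ^ 2
      ≤ (degree src dst v : ℝ) * (∑ e ∈ univ.filter fun e => dst e = v, q e (ℓ e) ^ 2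
          + ∑ e ∈ univ.filter fun e => src e = v, q e 0 ^ 2) := by
        rw [jump, degree, Nat.cast_add, add_comm]
        exact sq_sum_sub_sum_le_card_add_card_mul _ _ _ _
    _ ≤ _ := by
        gcongr with e _ e _
        · exact htrace e _ (right_mem_Icc.2 (hℓ e).le)
        · exact htrace e _ (left_mem_Icc.2 (hℓ e).le)

/-- Control of vertex jumps by edgewise `H¹` data: for an edgewise continuously
differentiable family `q` on a finite oriented metric graph, the jump at every vertex
`v` satisfies `⟦q⟧_v² ≤ d_v (∑_{e : dst e = v} T_e + ∑_{e : src e = v} T_e)` with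
`T_e = (1/ℓ e) ∫₀^{ℓ e} q_e² + 2 (∫₀^{ℓ e} q_e²)^{1/2} (∫₀^{ℓ e} (q_e')²)^{1/2}`;
hence the broken space `H¹(ℰ)` is contained in `H(div; 𝒢)`. -/
theorem jump_bound
    {E V : Type*} [Fintype E] [Fintype V] [DecidableEq V]
    (src dst : E → V) (ℓ : E → ℝ) (hℓ : ∀ e, 0 < ℓ e)
    (q q' : E → ℝ → ℝ)
    (hq : ∀ e, ∀ s ∈ Set.Icc (0:ℝ) (ℓ e),
      HasDerivWithinAt (q e) (q' e s) (Set.Icc (0:ℝ) (ℓ e)) s)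
    (hq' : ∀ e, ContinuousOn (q' e) (Set.Icc (0:ℝ) (ℓ e))) :
    ∀ v : V, (jump src dst ℓ q v) ^ 2
      ≤ (degree src dst v : ℝ) *
        ((∑ e ∈ Finset.univ.filter fun e => dst e = v,
            ((1 / ℓ e) * (∫ s in (0:ℝ)..(ℓ e), (q e s) ^ 2)
              + 2 * Real.sqrt (∫ s in (0:ℝ)..(ℓ e), (q e s) ^ 2)
                  * Real.sqrt (∫ s in (0:ℝ)..(ℓ e), (q' e s) ^ 2)))
          + ∑ e ∈ Finset.univ.filter fun e => src e = v,
            ((1 / ℓ e) * (∫ s in (0:ℝ)..(ℓ e), (q e s) ^ 2)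
              + 2 * Real.sqrt (∫ s in (0:ℝ)..(ℓ e), (q e s) ^ 2)
                  * Real.sqrt (∫ s in (0:ℝ)..(ℓ e), (q' e s) ^ 2))) :=
  jump_bound_general src dst ℓ hℓ q q' hq hq'
end
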